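/- arXiv:2502.02111 — 4 statements merged into one kernel-verified Lean document; each statement's English description precedes it below -/
import Mathlib

section
/- Let x ∈ ℝ, R > 0 and t ∈ ℝ with t ≠ 0. Let g : ℂ → ℂ be complex-differentiable on an open neighborhood of the closed disc {z : |z - x| ≤ R}, and assume |t · g(z)| < R for every z on the circle |z - x| = R. Then there exists a unique X in the open disc {z : |z - x| < R} satisfying X = x - t·g(X), and for this X one has g(X) = (1/(2πi t)) ∮_{|z-x|=R} Log(1 + t·g(z)/(z - x)) dz, where Log is the principal branch of the complex logarithm (well defined on the contour since |t·g(z)/(z - x)| < 1 there) and the integral is the counterclockwise contour integral over the circle |z - x| = R. -/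
open Complex Metric Set Filter FormalMultilinearSeries
open scoped Topology Classical

noncomputable def myOrd (f : ℂ → ℂ) (z₀ : ℂ) : ℕ :=
  if h : AnalyticAt ℂ f z₀ then (analyticOrderAt f z₀).toNat else 0

lemma ordP {f : ℂ → ℂ} {p : FormalMultilinearSeries ℂ ℂ ℂ} {z₀ : ℂ}
    (hp : HasFPowerSeriesAt f p z₀) (h0 : p ≠ 0) (ha : AnalyticAt ℂ f z₀) :
    analyticOrderAt f z₀ = (p.order : ℕ∞) := by
  rw [ha.analyticOrderAt_eq_natCast]
  exact ⟨_, ⟨_, hp.has_fpower_series_iterate_dslope_fslope p.order⟩,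
    hp.iterate_dslope_fslope_ne_zero h0, Filter.Eventually.of_forall hp.eq_pow_order_mul_iterate_dslope⟩

lemma myOrd_eq_zero {f : ℂ → ℂ} {z₀ : ℂ} (ha : AnalyticAt ℂ f z₀) (h : f z₀ ≠ 0) :
    myOrd f z₀ = 0 := by
  have : analyticOrderAt f z₀ = ((0 : ℕ) : ℕ∞) := by
    rw [ha.analyticOrderAt_eq_natCast]
    exact ⟨f, ha, h, by filter_upwards with z; simp⟩
  simp [myOrd, dif_pos ha, this]

lemma myOrd_pos {f : ℂ → ℂ} {z₀ : ℂ} (ha : AnalyticAt ℂ f z₀) (h0 : f z₀ = 0)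
    (hne : ¬ ∀ᶠ z in 𝓝 z₀, f z = 0) : 0 < myOrd f z₀ := by
  have htop : analyticOrderAt f z₀ ≠ ⊤ := fun h => hne (analyticOrderAt_eq_top.mp h)
  have hzero : analyticOrderAt f z₀ ≠ 0 := by
    intro h
    have h' : analyticOrderAt f z₀ = ((0 : ℕ) : ℕ∞) := by simpa using h
    rw [ha.analyticOrderAt_eq_natCast] at h'
    obtain ⟨g, hg, hgne, hgeq⟩ := h'
    exact hgne (by simpa [h0] using hgeq.self_of_nhds.symm)
  rw [myOrd, dif_pos ha]
  rcases WithTop.ne_top_iff_exists.mp htop with ⟨n, hn⟩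
  have : n ≠ 0 := by rintro rfl; exact hzero hn.symm
  rw [← hn]
  exact Nat.pos_of_ne_zero this

lemma myOrd_dslope_self {f : ℂ → ℂ} {X : ℂ} {p : FormalMultilinearSeries ℂ ℂ ℂ}
    (hp : HasFPowerSeriesAt f p X) (h0 : f X = 0) (hp0 : p ≠ 0) :
    myOrd f X = myOrd (dslope f X) X + 1 := by
  have haf : AnalyticAt ℂ f X := ⟨p, hp⟩
  have haψ : AnalyticAt ℂ (dslope f X) X := ⟨_, hp.has_fpower_series_dslope_fslope⟩
  have h1 : p.order ≠ 0 := by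
    intro h
    have h2 : p 0 ≠ 0 := (p.order_eq_zero_iff hp0).mp h
    have h3 : p.coeff 0 = f X := hp.coeff_zero 1
    rw [h0] at h3
    exact h2 (coeff_eq_zero.mp h3)
  have hcoeff : p.fslope.coeff (p.order - 1) = p.coeff p.order := by
    rw [coeff_fslope, Nat.sub_add_cancel (Nat.one_le_iff_ne_zero.mpr h1)]
  have h4 : p.fslope.coeff (p.order - 1) ≠ 0 := by
    rw [hcoeff]
    exact fun hc => (p.apply_order_ne_zero hp0) (coeff_eq_zero.mp hc)
  have happ : p.fslope (p.order - 1) ≠ 0 := fun h => h4 (coeff_eq_zero.mpr h)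
  have hfs0 : p.fslope ≠ 0 := fun h => happ (by simp [h])
  have hordf : analyticOrderAt f X = (p.order : ℕ∞) := ordP hp hp0 haf
  have hordψ : analyticOrderAt (dslope f X) X = (p.fslope.order : ℕ∞) :=
    ordP hp.has_fpower_series_dslope_fslope hfs0 haψ
  have hfo : p.fslope.order = p.order - 1 := by
    apply le_antisymm
    · exact Nat.sInf_le happ
    · refine le_csInf ⟨p.order - 1, happ⟩ ?_
      intro m hm
      have hmc : p.coeff (m + 1) ≠ 0 := by
        rw [← coeff_fslope]
        exact fun hc => hm (coeff_eq_zero.mp hc)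
      have hm' : p (m + 1) ≠ 0 := fun h => hmc (coeff_eq_zero.mpr h)
      have : p.order ≤ m + 1 := Nat.sInf_le hm'
      omega
  rw [myOrd, myOrd, dif_pos haf, dif_pos haψ, hordf, hordψ, hfo]
  simp only [ENat.toNat_coe]
  omega

lemma myOrd_dslope_of_ne {f : ℂ → ℂ} {X w : ℂ} (hw : w ≠ X) (h0 : f X = 0)
    (haf : AnalyticAt ℂ f w) (hne : ¬ ∀ᶠ z in 𝓝 w, f z = 0) :
    myOrd (dslope f X) w = myOrd f w := by
  have hev : dslope f X =ᶠ[𝓝 w] fun z => (z - X)⁻¹ * f z := by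
    filter_upwards [isOpen_ne.mem_nhds hw] with z hz
    rw [dslope_of_ne f hz, slope_def_field, h0, sub_zero, div_eq_inv_mul]
  have harhs : AnalyticAt ℂ (fun z => (z - X)⁻¹ * f z) w :=
    ((analyticAt_id.sub analyticAt_const).inv (sub_ne_zero.mpr hw)).mul haf
  have haψ : AnalyticAt ℂ (dslope f X) w := harhs.congr hev.symm
  have htop : analyticOrderAt f w ≠ ⊤ := fun h => hne (analyticOrderAt_eq_top.mp h)
  set n := (analyticOrderAt f w).toNat with hn
  have hofn : analyticOrderAt f w = (n : ℕ∞) := (ENat.coe_toNat htop).symm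
  rw [haf.analyticOrderAt_eq_natCast] at hofn
  obtain ⟨G, hG, hGne, hGeq⟩ := hofn
  have hoψ : analyticOrderAt (dslope f X) w = (n : ℕ∞) := by
    rw [haψ.analyticOrderAt_eq_natCast]
    refine ⟨fun z => (z - X)⁻¹ * G z, ((analyticAt_id.sub analyticAt_const).inv
      (sub_ne_zero.mpr hw)).mul hG, by
        simp only [mul_ne_zero_iff]
        exact ⟨inv_ne_zero (sub_ne_zero.mpr hw), hGne⟩, ?_⟩
    filter_upwards [hev, hGeq] with z h1 h2
    rw [h1, h2]
    simp only [smul_eq_mul]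
    ring
  rw [myOrd, myOrd, dif_pos haf, dif_pos haψ, hoψ, ← hn]
  simp

lemma nez_of_sphere {c : ℂ} {R R' : ℝ} (hR : 0 < R) (hRR' : R < R') {f : ℂ → ℂ}
    (hf : DifferentiableOn ℂ f (ball c R'))
    (hfs : ∀ z ∈ sphere c R, f z ≠ 0) {z₀ : ℂ} (hz₀ : z₀ ∈ ball c R') :
    ¬ ∀ᶠ z in 𝓝 z₀, f z = 0 := by
  intro h
  have hA : AnalyticOnNhd ℂ f (ball c R') := hf.analyticOnNhd isOpen_ball
  have h' : f =ᶠ[𝓝 z₀] 0 := h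
  have hz : EqOn f 0 (ball c R') :=
    hA.eqOn_zero_of_preconnected_of_eventuallyEq_zero
      (convex_ball c R').isPreconnected hz₀ h'
  have hw : (c + R : ℂ) ∈ sphere c R := by
    simp [Complex.dist_eq, abs_of_pos hR]
  have hw' : (c + R : ℂ) ∈ ball c R' := by
    simp only [mem_ball, Complex.dist_eq]
    rw [add_sub_cancel_left]
    simpa [abs_of_pos hR] using hRR'
  exact hfs _ hw (hz hw')

lemma finite_zeros {c : ℂ} {R R' : ℝ} (hR : 0 < R) (hRR' : R < R') {f : ℂ → ℂ}
    (hf : DifferentiableOn ℂ f (ball c R'))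
    (hfs : ∀ z ∈ sphere c R, f z ≠ 0) :
    {z | z ∈ closedBall c R ∧ f z = 0}.Finite := by
  by_contra hinf
  rw [← Set.not_infinite, not_not] at hinf
  obtain ⟨z₀, hz₀K, hacc⟩ := hinf.exists_accPt_of_subset_isCompact
    (isCompact_closedBall c R) (fun z hz => hz.1)
  have hz₀' : z₀ ∈ ball c R' := lt_of_le_of_lt (mem_closedBall.mp hz₀K) hRR'
  have hfreq : ∃ᶠ z in 𝓝[≠] z₀, f z = 0 := by
    have h1 := accPt_iff_frequently.mp hacc
    rw [frequently_nhdsWithin_iff]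
    exact h1.mono fun z hz => ⟨hz.2.2, hz.1⟩
  have hA : AnalyticAt ℂ f z₀ :=
    (hf.analyticOnNhd isOpen_ball) z₀ hz₀'
  exact nez_of_sphere hR hRR' hf hfs hz₀'
    (hA.frequently_zero_iff_eventually_zero.mp hfreq)

lemma count {c : ℂ} {R R' : ℝ} (hR : 0 < R) (hRR' : R < R') :
    ∀ (n : ℕ) (f : ℂ → ℂ), DifferentiableOn ℂ f (ball c R') →
      (∀ z ∈ sphere c R, f z ≠ 0) →
      ∀ S : Finset ℂ, (∀ z, z ∈ S ↔ z ∈ closedBall c R ∧ f z = 0) →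
      ∑ z ∈ S, myOrd f z = n →
      (∮ z in C(c, R), deriv f z / f z) = 2 * Real.pi * I * n := by
  have hsub : sphere c R ⊆ ball c R' := fun z hz => by
    rw [mem_sphere] at hz; exact mem_ball.mpr (hz ▸ hRR')
  intro n
  induction n with
  | zero =>
    intro f hf hfs S hS hsum
    have hSe : S = ∅ := by
      by_contra hne
      obtain ⟨X, hXS⟩ := Finset.nonempty_of_ne_empty hne
      obtain ⟨hXcb, hX0⟩ := (hS X).mp hXS
      have hXb : X ∈ ball c R' := lt_of_le_of_lt (mem_closedBall.mp hXcb) hRR'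
      have hpos := myOrd_pos ((hf.analyticOnNhd isOpen_ball) X hXb) hX0
        (nez_of_sphere hR hRR' hf hfs hXb)
      have hle : myOrd f X ≤ ∑ z ∈ S, myOrd f z :=
        Finset.single_le_sum (fun z _ => Nat.zero_le _) hXS
      omega
    have hnz : ∀ z ∈ closedBall c R, f z ≠ 0 := fun z hz h0 => by
      have : z ∈ S := (hS z).mpr ⟨hz, h0⟩
      rw [hSe] at this; simp at this
    set V := ball c R' ∩ f ⁻¹' ({0}ᶜ) with hV
    have hVopen : IsOpen V :=
      hf.continuousOn.isOpen_inter_preimage isOpen_ball isOpen_compl_singleton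
    have hVsub : closedBall c R ⊆ V := fun z hz =>
      ⟨lt_of_le_of_lt (mem_closedBall.mp hz) hRR', hnz z hz⟩
    have hderiv : DifferentiableOn ℂ (deriv f) (ball c R') :=
      ((hf.analyticOnNhd isOpen_ball).deriv).differentiableOn
    have hFdiff : DifferentiableOn ℂ (fun z => deriv f z / f z) V :=
      (hderiv.mono inter_subset_left).div (hf.mono inter_subset_left)
        (fun z hz => hz.2)
    have h0 := Complex.circleIntegral_eq_zero_of_differentiable_on_off_countable hR.le
      Set.countable_empty (hFdiff.continuousOn.mono hVsub)
      (fun z hz => hFdiff.differentiableAt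
        (hVopen.mem_nhds (hVsub (ball_subset_closedBall hz.1))))
    rw [h0]; simp
  | succ n ih =>
    intro f hf hfs S hS hsum
    have hAn : AnalyticOnNhd ℂ f (ball c R') := hf.analyticOnNhd isOpen_ball
    have hSne : S.Nonempty := by
      rw [Finset.nonempty_iff_ne_empty]; rintro rfl; simp at hsum
    obtain ⟨X, hXS⟩ := hSne
    obtain ⟨hXcb, hX0⟩ := (hS X).mp hXS
    have hXb' : X ∈ ball c R' := lt_of_le_of_lt (mem_closedBall.mp hXcb) hRR'
    have hXnotS : X ∉ sphere c R := fun h => hfs X h hX0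
    have hXball : X ∈ ball c R := by
      rcases (mem_closedBall.mp hXcb).lt_or_eq with h | h
      · exact mem_ball.mpr h
      · exact absurd (mem_sphere.mpr h) hXnotS
    obtain ⟨p, hp⟩ := hAn X hXb'
    have hnez := nez_of_sphere hR hRR' hf hfs hXb'
    have hp0 : p ≠ 0 := fun h => hnez (hp.locally_zero_iff.mpr h)
    set ψ := dslope f X with hψdef
    have haψX : AnalyticAt ℂ ψ X := ⟨_, hp.has_fpower_series_dslope_fslope⟩
    have hψdiff : DifferentiableOn ℂ ψ (ball c R') := by
      intro z hz
      rcases eq_or_ne z X with rfl | hne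
      · exact haψX.differentiableAt.differentiableWithinAt
      · exact (differentiableWithinAt_dslope_of_ne hne).mpr (hf z hz)
    have hfactor : ∀ z, f z = (z - X) * ψ z := by
      intro z
      have h1 := sub_smul_dslope f X z
      rw [hX0, sub_zero] at h1
      simpa [smul_eq_mul] using h1.symm
    have hψs : ∀ z ∈ sphere c R, ψ z ≠ 0 := by
      intro z hz h0
      exact hfs z hz (by rw [hfactor z, h0, mul_zero])
    classical
    set S' : Finset ℂ := if ψ X = 0 then S else S.erase X with hS'def
    have hS' : ∀ w, w ∈ S' ↔ w ∈ closedBall c R ∧ ψ w = 0 := by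
      intro w
      by_cases hwX : w = X
      · subst hwX
        by_cases hψ0 : ψ w = 0
        · simp [hS'def, hψ0, hXS, hXcb]
        · simp [hS'def, hψ0, hXcb]
      · have hiff : ψ w = 0 ↔ f w = 0 := by
          constructor
          · intro h; rw [hfactor w, h, mul_zero]
          · intro h
            rcases mul_eq_zero.mp ((hfactor w).symm.trans h) with h' | h'
            · exact absurd (sub_eq_zero.mp h') hwX
            · exact h'
        by_cases hψ0 : ψ X = 0 <;>
          simp [hS'def, hψ0, Finset.mem_erase, hwX, hS w, hiff]
    have hordtrans : ∀ z ∈ S.erase X, myOrd ψ z = myOrd f z := by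
      intro z hz
      rw [Finset.mem_erase] at hz
      obtain ⟨hzX, hzS⟩ := hz
      obtain ⟨hzcb, hz0⟩ := (hS z).mp hzS
      have hzb' : z ∈ ball c R' := lt_of_le_of_lt (mem_closedBall.mp hzcb) hRR'
      exact myOrd_dslope_of_ne hzX hX0 (hAn z hzb')
        (nez_of_sphere hR hRR' hf hfs hzb')
    have hordX : myOrd f X = myOrd ψ X + 1 := myOrd_dslope_self hp hX0 hp0
    have hsum' : ∑ z ∈ S', myOrd ψ z = n := by
      have hsplit : ∑ z ∈ S, myOrd f z = myOrd f X + ∑ z ∈ S.erase X, myOrd f z :=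
        (Finset.add_sum_erase S _ hXS).symm
      have heq1 : ∑ z ∈ S.erase X, myOrd ψ z = ∑ z ∈ S.erase X, myOrd f z :=
        Finset.sum_congr rfl hordtrans
      by_cases hψ0 : ψ X = 0
      · have hSS : S' = S := by simp [hS'def, hψ0]
        rw [hSS]
        have hsplit2 : ∑ z ∈ S, myOrd ψ z = myOrd ψ X + ∑ z ∈ S.erase X, myOrd ψ z :=
          (Finset.add_sum_erase S _ hXS).symm
        omega
      · have hSS : S' = S.erase X := by simp [hS'def, hψ0]
        have hψX0 : myOrd ψ X = 0 := myOrd_eq_zero haψX hψ0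
        rw [hSS]
        omega
    have hEq : EqOn (fun z => deriv f z / f z)
        (fun z => (z - X)⁻¹ + deriv ψ z / ψ z) (sphere c R) := by
      intro z hz
      have hzb' : z ∈ ball c R' := hsub hz
      have hψd : HasDerivAt ψ (deriv ψ z) z :=
        (hψdiff.differentiableAt (isOpen_ball.mem_nhds hzb')).hasDerivAt
      have h1 : HasDerivAt (fun w => (w - X) * ψ w)
          (1 * ψ z + (z - X) * deriv ψ z) z :=
        ((hasDerivAt_id z).sub_const X).mul hψd
      rw [one_mul] at h1
      have hfd : HasDerivAt f (ψ z + (z - X) * deriv ψ z) z := by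
        have hfe : f = fun w => (w - X) * ψ w := funext hfactor
        rw [hfe]; exact h1
      have hder : deriv f z = ψ z + (z - X) * deriv ψ z := hfd.deriv
      have hzX : z ≠ X := fun h => hXnotS (by rw [← h]; exact hz)
      have hψz : ψ z ≠ 0 := hψs z hz
      simp only
      rw [hder, hfactor z]
      field_simp [sub_ne_zero.mpr hzX]
    have hcontf : ContinuousOn (fun z => deriv f z / f z) (sphere c R) :=
      ((hAn.deriv.continuousOn).mono hsub).div ((hf.continuousOn).mono hsub) hfs
    have hcontψ : ContinuousOn (fun z => deriv ψ z / ψ z) (sphere c R) :=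
      (((hψdiff.analyticOnNhd isOpen_ball).deriv.continuousOn).mono hsub).div
        ((hψdiff.continuousOn).mono hsub) hψs
    have hIf : CircleIntegrable (fun z => deriv f z / f z) c R :=
      hcontf.circleIntegrable hR.le
    have hIinv : CircleIntegrable (fun z => (z - X)⁻¹) c R :=
      (((continuous_id.sub continuous_const).continuousOn).inv₀
        (fun z hz => sub_ne_zero.mpr
          (fun h => hXnotS (by simp only [_root_.id] at h; rw [← h]; exact hz)))).circleIntegrable hR.le
    have key : (∮ z in C(c, R), (deriv f z / f z - (z - X)⁻¹)) =
        ∮ z in C(c, R), deriv ψ z / ψ z := by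
      refine circleIntegral.integral_congr hR.le (fun z hz => ?_)
      have := hEq hz
      simp only at this ⊢
      rw [this]; ring
    rw [circleIntegral.integral_sub hIf hIinv,
      circleIntegral.integral_sub_inv_of_mem_ball hXball,
      ih ψ hψdiff hψs S' hS' hsum'] at key
    push_cast
    linear_combination key

/-- Theorem 2.1 of the paper: explicit contour-integral solution for `c(u)`,
here `g = c ∘ u₀`.  There is a unique `X` in the open disc of center `x`,
radius `R` with `X = x - t·g(X)`, and for this `X`,
`g(X) = (1/(2πi t)) ∮_{|z-x|=R} Log(1 + t·g(z)/(z-x)) dz`. -/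
theorem explicit_solution_for_c
    (x : ℝ) (R : ℝ) (hR : 0 < R) (t : ℝ) (ht : t ≠ 0)
    (g : ℂ → ℂ) (U : Set ℂ) (hU : IsOpen U)
    (hUc : closedBall (x : ℂ) R ⊆ U) (hg : DifferentiableOn ℂ g U)
    (hsmall : ∀ z : ℂ, ‖z - (x : ℂ)‖ = R →
      ‖(t : ℂ) * g z‖ < R) :
    (∃! X : ℂ, X ∈ ball (x : ℂ) R ∧ X = (x : ℂ) - (t : ℂ) * g X) ∧
    (∀ X : ℂ, X ∈ ball (x : ℂ) R → X = (x : ℂ) - (t : ℂ) * g X →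
      g X = (1 / (2 * Real.pi * Complex.I * (t : ℂ))) *
        ∮ z in C((x : ℂ), R),
          Complex.log (1 + (t : ℂ) * g z / (z - (x : ℂ)))) := by
  classical
  set c : ℂ := (x : ℂ) with hc
  -- enlarge the disc
  obtain ⟨δ, hδ, hthick⟩ :=
    (isCompact_closedBall c R).exists_cthickening_subset_open hU hUc
  set R' : ℝ := R + δ with hR'
  have hRR' : R < R' := by simp [hR', hδ]
  have hballU : ball c R' ⊆ U := by
    refine subset_trans ?_ hthick
    rw [cthickening_closedBall hδ.le hR.le]
    exact ball_subset_closedBall.trans (closedBall_subset_closedBall (by linarith))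
  have hsub : sphere c R ⊆ ball c R' := fun z hz => by
    rw [mem_sphere] at hz; exact mem_ball.mpr (hz ▸ hRR')
  have hcbsub : closedBall c R ⊆ ball c R' := fun z hz =>
    lt_of_le_of_lt (mem_closedBall.mp hz) hRR'
  have hg' : DifferentiableOn ℂ g (ball c R') := hg.mono hballU
  set h : ℂ → ℂ := fun z => z - c + (t : ℂ) * g z with hh
  have hhd : ∀ z ∈ ball c R', HasDerivAt h (1 + (t : ℂ) * deriv g z) z := by
    intro z hz
    have hgd : HasDerivAt g (deriv g z) z :=
      (hg'.differentiableAt (isOpen_ball.mem_nhds hz)).hasDerivAt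
    exact ((hasDerivAt_id z).sub_const c).add (hgd.const_mul (t : ℂ))
  have hdh : ∀ z ∈ ball c R', deriv h z = 1 + (t : ℂ) * deriv g z :=
    fun z hz => (hhd z hz).deriv
  have hdiffh : DifferentiableOn ℂ h (ball c R') := fun z hz =>
    ((hhd z hz).differentiableAt).differentiableWithinAt
  have habs : ∀ z ∈ sphere c R, ‖z - c‖ = R := fun z hz => by
    rw [mem_sphere, Complex.dist_eq] at hz; exact hz
  have hh0 : ∀ z ∈ sphere c R, h z ≠ 0 := by
    intro z hz h0
    have h1 := hsmall z (habs z hz)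
    have h2 : (t : ℂ) * g z = -(z - c) := by
      rw [hh] at h0; linear_combination h0
    rw [h2, norm_neg] at h1
    rw [habs z hz] at h1
    exact lt_irrefl _ h1
  -- the annulus-like open set W
  set W : Set ℂ := ball c R' ∩
      (fun z => ‖z - c‖ - ‖(t : ℂ) * g z‖) ⁻¹' Set.Ioi 0 with hW
  have hWopen : IsOpen W := by
    refine ContinuousOn.isOpen_inter_preimage ?_ isOpen_ball isOpen_Ioi
    exact ((continuous_norm.comp (continuous_id.sub continuous_const)).continuousOn).sub
      (continuous_norm.comp_continuousOn (continuousOn_const.mul hg'.continuousOn))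
  have hsphW : sphere c R ⊆ W := by
    intro z hz
    refine ⟨hsub hz, ?_⟩
    simp only [Set.mem_preimage, Set.mem_Ioi]
    rw [habs z hz]
    have := hsmall z (habs z hz)
    linarith
  have hWlt : ∀ z ∈ W, ‖(t : ℂ) * g z‖ < ‖z - c‖ := by
    intro z hz
    have := hz.2
    simp only [Set.mem_preimage, Set.mem_Ioi] at this
    linarith
  have hWb' : ∀ z ∈ W, z ∈ ball c R' := fun z hz => hz.1
  have hWnec : ∀ z ∈ W, z ≠ c := by
    intro z hz h0
    have h1 := hWlt z hz
    rw [h0] at h1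
    simp at h1
    exact absurd h1 (not_lt.mpr (by positivity))
  have hWh0 : ∀ z ∈ W, h z ≠ 0 := by
    intro z hz h0
    have h2 : (t : ℂ) * g z = -(z - c) := by rw [hh] at h0; linear_combination h0
    have h1 := hWlt z hz
    rw [h2, norm_neg] at h1
    exact lt_irrefl _ h1
  set q : ℂ → ℂ := fun z => 1 + (t : ℂ) * g z / (z - c) with hq
  have hqball : ∀ z ∈ W, q z ∈ ball (1 : ℂ) 1 := by
    intro z hz
    have hne : z - c ≠ 0 := sub_ne_zero.mpr (hWnec z hz)
    rw [mem_ball, Complex.dist_eq]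
    have : q z - 1 = (t : ℂ) * g z / (z - c) := by rw [hq]; ring
    rw [this, norm_div]
    rw [div_lt_one (norm_pos_iff.mpr hne)]
    exact hWlt z hz
  have hslit : ball (1 : ℂ) 1 ⊆ Complex.slitPlane := by
    intro z hz
    rw [mem_ball, Complex.dist_eq] at hz
    left
    have h1 : |(z - 1).re| ≤ ‖z - 1‖ := Complex.abs_re_le_norm _
    have h2 : (z - 1).re = z.re - 1 := by simp
    have := abs_le.mp h1
    simp only [h2] at this
    linarith [this.1]
  have hq0 : ∀ z ∈ W, q z ≠ 0 :=
    fun z hz => ne_of_mem_of_not_mem (hslit (hqball z hz)) Complex.zero_notMem_slitPlane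
  have hqh : ∀ z ∈ W, q z = h z / (z - c) := by
    intro z hz
    have hne : z - c ≠ 0 := sub_ne_zero.mpr (hWnec z hz)
    rw [hq, hh]
    field_simp
  set L : ℂ → ℂ := fun z => Complex.log (1 + (t : ℂ) * g z / (z - c)) with hL
  set L' : ℂ → ℂ := fun z => deriv h z / h z - (z - c)⁻¹ with hL'
  have hLd : ∀ z ∈ W, HasDerivAt L (L' z) z := by
    intro z hz
    have hzb' := hWb' z hz
    have hne : z - c ≠ 0 := sub_ne_zero.mpr (hWnec z hz)
    have hgd : HasDerivAt g (deriv g z) z :=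
      (hg'.differentiableAt (isOpen_ball.mem_nhds hzb')).hasDerivAt
    have hdiv : HasDerivAt (fun w => (t : ℂ) * g w / (w - c))
        (((t : ℂ) * deriv g z * (z - c) - (t : ℂ) * g z * 1) / (z - c) ^ 2) z :=
      (hgd.const_mul (t : ℂ)).div ((hasDerivAt_id z).sub_const c) hne
    have hqd : HasDerivAt q
        (((t : ℂ) * deriv g z * (z - c) - (t : ℂ) * g z * 1) / (z - c) ^ 2) z :=
      hdiv.const_add 1
    have hlog := hqd.clog (hslit (hqball z hz))
    have hhz : h z ≠ 0 := hWh0 z hz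
    have hhzv : z - c + (t : ℂ) * g z ≠ 0 := by simpa [hh] using hhz
    have heq : (((t : ℂ) * deriv g z * (z - c) - (t : ℂ) * g z * 1) / (z - c) ^ 2) / q z
        = L' z := by
      simp only [hL']
      rw [hqh z hz, hdh z hzb']
      simp only [hh]
      field_simp
      ring
    rw [heq] at hlog
    exact hlog
  -- winding number of h is 2 π I
  have hAnh : AnalyticOnNhd ℂ h (ball c R') := hdiffh.analyticOnNhd isOpen_ball
  have hcontdh : ContinuousOn (fun z => deriv h z / h z) (sphere c R) :=
    ((hAnh.deriv.continuousOn).mono hsub).div ((hdiffh.continuousOn).mono hsub) hh0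
  have hIh : CircleIntegrable (fun z => deriv h z / h z) c R :=
    hcontdh.circleIntegrable hR.le
  have hIc : CircleIntegrable (fun z => (z - c)⁻¹) c R :=
    (((continuous_id.sub continuous_const).continuousOn).inv₀
      (fun z hz => sub_ne_zero.mpr (fun h' => by
        have h2 := habs z hz
        simp only [_root_.id] at h'
        rw [h', sub_self] at h2
        rw [norm_zero] at h2
        exact hR.ne' h2.symm))).circleIntegrable hR.le
  -- the winding integral equals 2 pi I
  have hzero1 : (∮ z in C(c, R), (deriv h z / h z - (z - c)⁻¹)) = 0 := by
    refine circleIntegral.integral_eq_zero_of_hasDerivWithinAt hR.le (f := L) ?_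
    intro z hz
    exact ((hLd z (hsphW hz)).hasDerivWithinAt)
  have hNval : (∮ z in C(c, R), deriv h z / h z) = 2 * Real.pi * I := by
    rw [circleIntegral.integral_sub hIh hIc, circleIntegral.integral_sub_center_inv c hR.ne']
      at hzero1
    linear_combination hzero1
  -- the zero set
  have hfin := finite_zeros hR hRR' hdiffh hh0
  set S : Finset ℂ := hfin.toFinset with hS
  have hSmem : ∀ z, z ∈ S ↔ z ∈ closedBall c R ∧ h z = 0 := by
    intro z; rw [hS, Set.Finite.mem_toFinset]; rfl
  have hcount := count hR hRR' (∑ z ∈ S, myOrd h z) h hdiffh hh0 S hSmem rfl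
  have h2piI : (2 * (Real.pi : ℂ) * I) ≠ 0 := by
    refine mul_ne_zero (mul_ne_zero two_ne_zero ?_) Complex.I_ne_zero
    exact_mod_cast Real.pi_ne_zero
  have hn1 : ∑ z ∈ S, myOrd h z = 1 := by
    have hcast : ((∑ z ∈ S, myOrd h z : ℕ) : ℂ) = 1 := by
      have h2 := hNval.symm.trans hcount
      have h3 : (2 * (Real.pi : ℂ) * I) * 1 = (2 * (Real.pi : ℂ) * I) * (∑ z ∈ S, myOrd h z : ℕ) := by
        linear_combination h2
      exact (mul_left_cancel₀ h2piI h3).symm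
    exact_mod_cast hcast
  -- extract the unique zero X
  have hSne : S.Nonempty := by
    rw [Finset.nonempty_iff_ne_empty]; rintro h'; rw [h'] at hn1; simp at hn1
  obtain ⟨X, hXS⟩ := hSne
  obtain ⟨hXcb, hX0⟩ := (hSmem X).mp hXS
  have hXb' : X ∈ ball c R' := hcbsub hXcb
  have hXnotS : X ∉ sphere c R := fun h' => hh0 X h' hX0
  have hXball : X ∈ ball c R := by
    rcases (mem_closedBall.mp hXcb).lt_or_eq with h' | h'
    · exact mem_ball.mpr h'
    · exact absurd (mem_sphere.mpr h') hXnotS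
  have hmyOrdpos : ∀ z ∈ S, 0 < myOrd h z := by
    intro z hzS
    obtain ⟨hzcb, hz0⟩ := (hSmem z).mp hzS
    exact myOrd_pos ((hdiffh.analyticOnNhd isOpen_ball) z (hcbsub hzcb)) hz0
      (nez_of_sphere hR hRR' hdiffh hh0 (hcbsub hzcb))
  have hXuniq : ∀ Y ∈ S, Y = X := by
    intro Y hYS
    by_contra hne
    have hpair : ({X, Y} : Finset ℂ) ⊆ S := by
      intro z hz
      rcases Finset.mem_insert.mp hz with rfl | hz
      · exact hXS
      · rw [Finset.mem_singleton] at hz; rw [hz]; exact hYS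
    have hsumpair : myOrd h X + myOrd h Y ≤ ∑ z ∈ S, myOrd h z := by
      rw [← Finset.sum_pair (fun h' => hne h'.symm)]
      exact Finset.sum_le_sum_of_subset hpair
    have h1 := hmyOrdpos X hXS
    have h2 := hmyOrdpos Y hYS
    omega
  have hordX1 : myOrd h X = 1 := by
    have hle : myOrd h X ≤ ∑ z ∈ S, myOrd h z :=
      Finset.single_le_sum (fun z _ => Nat.zero_le _) hXS
    have := hmyOrdpos X hXS
    omega
  -- the factor psi
  obtain ⟨p, hp⟩ := (hdiffh.analyticOnNhd isOpen_ball) X hXb'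
  have hnezX := nez_of_sphere hR hRR' hdiffh hh0 hXb'
  have hp0 : p ≠ 0 := fun h' => hnezX (hp.locally_zero_iff.mpr h')
  set ψ : ℂ → ℂ := dslope h X with hψdef
  have haψX : AnalyticAt ℂ ψ X := ⟨_, hp.has_fpower_series_dslope_fslope⟩
  have hψdiff : DifferentiableOn ℂ ψ (ball c R') := by
    intro z hz
    rcases eq_or_ne z X with rfl | hne
    · exact haψX.differentiableAt.differentiableWithinAt
    · exact (differentiableWithinAt_dslope_of_ne hne).mpr (hdiffh z hz)
  have hfactor : ∀ z, h z = (z - X) * ψ z := by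
    intro z
    have h1 := sub_smul_dslope h X z
    rw [hX0, sub_zero] at h1
    simpa [smul_eq_mul] using h1.symm
  have hψX : ψ X ≠ 0 := by
    intro h'
    have hnezψ : ¬ ∀ᶠ z in 𝓝 X, ψ z = 0 := by
      intro hev
      apply hnezX
      filter_upwards [hev] with z hz
      rw [hfactor z, hz, mul_zero]
    have ha1 := myOrd_pos haψX h' hnezψ
    have ha2 := myOrd_dslope_self hp hX0 hp0
    rw [← hψdef] at ha2
    omega
  have hψnz : ∀ z ∈ closedBall c R, ψ z ≠ 0 := by
    intro z hz h'
    rcases eq_or_ne z X with rfl | hne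
    · exact hψX h'
    · have : h z = 0 := by rw [hfactor z, h', mul_zero]
      exact hne (hXuniq z ((hSmem z).mpr ⟨hz, this⟩))
  -- fixed point equation for X
  have hXeq : X = c - (t : ℂ) * g X := by
    have h1 : X - c + (t : ℂ) * g X = 0 := by
      have := hX0; simp only [hh] at this; exact this
    linear_combination h1
  -- continuity facts
  have hψAn : AnalyticOnNhd ℂ ψ (ball c R') := hψdiff.analyticOnNhd isOpen_ball
  have hψcont : ContinuousOn ψ (ball c R') := hψdiff.continuousOn
  have hdψcont : ContinuousOn (deriv ψ) (ball c R') := hψAn.deriv.continuousOn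
  have hψsph : ∀ z ∈ sphere c R, ψ z ≠ 0 := fun z hz =>
    hψnz z (sphere_subset_closedBall hz)
  have hzXsph : ∀ z ∈ sphere c R, z ≠ X := fun z hz h' =>
    hXnotS (by rw [← h']; exact hz)
  have hzcsph : ∀ z ∈ sphere c R, z - c ≠ 0 := by
    intro z hz h0
    have h2 := habs z hz
    rw [h0, norm_zero] at h2
    exact hR.ne' h2.symm
  -- product rule for h on the sphere
  have hdevh : ∀ z ∈ sphere c R, deriv h z = ψ z + (z - X) * deriv ψ z := by
    intro z hz
    have hzb' := hsub hz
    have hψd : HasDerivAt ψ (deriv ψ z) z :=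
      (hψdiff.differentiableAt (isOpen_ball.mem_nhds hzb')).hasDerivAt
    have h1 : HasDerivAt (fun w => (w - X) * ψ w)
        (1 * ψ z + (z - X) * deriv ψ z) z :=
      ((hasDerivAt_id z).sub_const X).mul hψd
    rw [one_mul] at h1
    have hfe : h = fun w => (w - X) * ψ w := funext hfactor
    rw [hfe]
    exact h1.deriv
  have hLcont : ContinuousOn L (sphere c R) := fun z hz =>
    ((hLd z (hsphW hz)).continuousAt).continuousWithinAt
  have hinvc : ContinuousOn (fun z : ℂ => (z - c)⁻¹) (sphere c R) :=
    ((continuous_id.sub continuous_const).continuousOn).inv₀ (fun z hz => hzcsph z hz)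
  have hL'cont : ContinuousOn L' (sphere c R) := hcontdh.sub hinvc
  have hIL : CircleIntegrable L c R := hLcont.circleIntegrable hR.le
  have hIL' : CircleIntegrable (fun z => (z - c) * L' z) c R :=
    (((continuous_id.sub continuous_const).continuousOn).mul hL'cont).circleIntegrable hR.le
  have hIsum : CircleIntegrable (fun z => L z + (z - c) * L' z) c R := by
    simpa [Pi.add_def] using hIL.add hIL'
  have hzero2 : (∮ z in C(c, R), (L z + (z - c) * L' z)) = 0 := by
    refine circleIntegral.integral_eq_zero_of_hasDerivWithinAt hR.le
      (f := fun w => (w - c) * L w) ?_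
    intro z hz
    have h1 : HasDerivAt (fun w => (w - c) * L w) (1 * L z + (z - c) * L' z) z :=
      ((hasDerivAt_id z).sub_const c).mul (hLd z (hsphW hz))
    rw [one_mul] at h1
    exact h1.hasDerivWithinAt
  have hA : (∮ z in C(c, R), L z) = - ∮ z in C(c, R), (z - c) * L' z := by
    have h1 := circleIntegral.integral_sub hIsum hIL'
    simp only [add_sub_cancel_right] at h1
    rw [hzero2] at h1
    linear_combination h1
  have hIdevh2 : CircleIntegrable (fun z => (z - c) * deriv h z / h z) c R :=
    ((((continuous_id.sub continuous_const).continuousOn).mul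
      ((hAnh.deriv.continuousOn).mono hsub)).div
      ((hdiffh.continuousOn).mono hsub) hh0).circleIntegrable hR.le
  have hIone : CircleIntegrable (fun _ : ℂ => (1 : ℂ)) c R :=
    circleIntegrable_const 1 c R
  have hone : (∮ _z in C(c, R), (1 : ℂ)) = 0 := by
    refine circleIntegral.integral_eq_zero_of_hasDerivWithinAt hR.le
      (f := fun w => w) ?_
    intro z hz
    exact (hasDerivAt_id z).hasDerivWithinAt
  have hEB : Set.EqOn (fun z => (z - c) * L' z)
      (fun z => (z - c) * deriv h z / h z - 1) (sphere c R) := by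
    intro z hz
    simp only [hL']
    rw [mul_sub, mul_inv_cancel₀ (hzcsph z hz)]
    ring
  have hB1 : (∮ z in C(c, R), (z - c) * L' z)
      = ∮ z in C(c, R), ((z - c) * deriv h z / h z - 1) :=
    circleIntegral.integral_congr hR.le hEB
  have hB2 : (∮ z in C(c, R), ((z - c) * deriv h z / h z - 1))
      = ∮ z in C(c, R), (z - c) * deriv h z / h z := by
    rw [circleIntegral.integral_sub hIdevh2 hIone, hone, sub_zero]
  have hE2 : Set.EqOn (fun z => (z - c) * deriv h z / h z)
      (fun z => (1 + (X - c) * (z - X)⁻¹) + (z - c) * deriv ψ z / ψ z)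
      (sphere c R) := by
    intro z hz
    simp only
    rw [hdevh z hz, hfactor z]
    field_simp [sub_ne_zero.mpr (hzXsph z hz), hψsph z hz]
    ring
  have hIDterm : CircleIntegrable (fun z => (1 + (X - c) * (z - X)⁻¹)) c R :=
    (continuousOn_const.add (continuousOn_const.mul
      (((continuous_id.sub continuous_const).continuousOn).inv₀
        (fun z hz => sub_ne_zero.mpr (hzXsph z hz))))).circleIntegrable hR.le
  have hIEterm : CircleIntegrable (fun z => (z - c) * deriv ψ z / ψ z) c R :=
    ((((continuous_id.sub continuous_const).continuousOn).mul
      (hdψcont.mono hsub)).div (hψcont.mono hsub) hψsph).circleIntegrable hR.le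
  have hC1 : (∮ z in C(c, R), (z - c) * deriv h z / h z)
      = ∮ z in C(c, R), ((1 + (X - c) * (z - X)⁻¹) + (z - c) * deriv ψ z / ψ z) :=
    circleIntegral.integral_congr hR.le hE2
  have hEzero : (∮ z in C(c, R), (z - c) * deriv ψ z / ψ z) = 0 := by
    set V := ball c R' ∩ ψ ⁻¹' ({0}ᶜ) with hV
    have hVopen : IsOpen V :=
      hψcont.isOpen_inter_preimage isOpen_ball isOpen_compl_singleton
    have hVsub : closedBall c R ⊆ V := fun z hz => ⟨hcbsub hz, hψnz z hz⟩
    have hFdiff : DifferentiableOn ℂ (fun z => (z - c) * deriv ψ z / ψ z) V :=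
      ((differentiableOn_id.sub (differentiableOn_const c)).mul
        ((hψAn.deriv.differentiableOn).mono inter_subset_left)).div
        (hψdiff.mono inter_subset_left) (fun z hz => hz.2)
    exact Complex.circleIntegral_eq_zero_of_differentiable_on_off_countable hR.le
      Set.countable_empty (hFdiff.continuousOn.mono hVsub)
      (fun z hz => hFdiff.differentiableAt
        (hVopen.mem_nhds (hVsub (ball_subset_closedBall hz.1))))
  have hIinvX : CircleIntegrable (fun z => (X - c) * (z - X)⁻¹) c R :=
    (continuousOn_const.mul
      (((continuous_id.sub continuous_const).continuousOn).inv₀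
        (fun z hz => sub_ne_zero.mpr (hzXsph z hz)))).circleIntegrable hR.le
  have hD : (∮ z in C(c, R), (1 + (X - c) * (z - X)⁻¹))
      = (X - c) * (2 * Real.pi * I) := by
    have h1 := circleIntegral.integral_sub hIDterm hIinvX
    simp only [add_sub_cancel_right] at h1
    rw [hone] at h1
    have h2 : (∮ z in C(c, R), (X - c) * (z - X)⁻¹) = (X - c) * (2 * Real.pi * I) := by
      rw [circleIntegral.integral_const_mul,
        circleIntegral.integral_sub_inv_of_mem_ball hXball]
    rw [h2] at h1
    linear_combination -h1
  have hIsum2 : CircleIntegrable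
      (fun z => (1 + (X - c) * (z - X)⁻¹) + (z - c) * deriv ψ z / ψ z) c R := by
    simpa [Pi.add_def] using hIDterm.add hIEterm
  have hC : (∮ z in C(c, R), (z - c) * deriv h z / h z)
      = (X - c) * (2 * Real.pi * I) := by
    rw [hC1]
    have h1 := circleIntegral.integral_sub hIsum2 hIDterm
    simp only [add_sub_cancel_left] at h1
    rw [hEzero, hD] at h1
    linear_combination -h1
  have hAval : circleIntegral L c R = ((t : ℂ) * g X) * (2 * Real.pi * I) := by
    show (∮ z in C(c, R), L z) = _
    rw [hA, hB1, hB2, hC]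
    have hXc : X - c = -((t : ℂ) * g X) := by linear_combination hXeq
    rw [hXc]
    ring
  have htC : (t : ℂ) ≠ 0 := Complex.ofReal_ne_zero.mpr ht
  have hpiC : (Real.pi : ℂ) ≠ 0 := Complex.ofReal_ne_zero.mpr Real.pi_ne_zero
  constructor
  · refine ⟨X, ⟨hXball, hXeq⟩, ?_⟩
    rintro Y ⟨hYball, hYeq⟩
    have hY0 : h Y = 0 := by
      simp only [hh]; linear_combination hYeq
    exact hXuniq Y ((hSmem Y).mpr ⟨ball_subset_closedBall hYball, hY0⟩)
  · intro X' hX'ball hX'eq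
    have hX'0 : h X' = 0 := by
      simp only [hh]; linear_combination hX'eq
    have hXX : X' = X :=
      hXuniq X' ((hSmem X').mpr ⟨ball_subset_closedBall hX'ball, hX'0⟩)
    rw [hXX]
    rw [hAval]
    field_simp
end

section
/- Fix x₀ ∈ ℝ and R > 0. Let u₀ : ℂ → ℂ be complex-differentiable on an open neighborhood of the closed disc {z : |z - x₀| ≤ R} and let c : ℂ → ℂ be entire. For real (x, t), define u(x,t) := (1/(2πi)) ∮_{|z-x₀|=R} (1 + t·c'(u₀(z))·u₀'(z)) · u₀(z) / (z - x + t·c(u₀(z))) dz. Let (x*, t*) ∈ ℝ² be such that |x* - x₀| < R, |z - x*| > |t*·c(u₀(z))| for all z on the circle |z - x₀| = R, and the unique zero z* of z ↦ z - x* + t*·c(u₀(z)) in the open disc is simple, i.e. 1 + t*·c'(u₀(z*))·u₀'(z*) ≠ 0. Then u has partial derivatives u_x and u_t at (x*, t*) and they satisfy u_t(x*,t*) + c(u(x*,t*))·u_x(x*,t*) = 0; moreover u(x, 0) = u₀(x) for every real x with |x - x₀| < R. -/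
open Complex Metric
open Set

lemma circleIntegral_add' {f g : ℂ → ℂ} {c : ℂ} {R : ℝ} (hf : CircleIntegrable f c R)
    (hg : CircleIntegrable g c R) :
    (∮ z in C(c, R), (f z + g z)) = (∮ z in C(c, R), f z) + ∮ z in C(c, R), g z := by
  simp only [circleIntegral, smul_add, intervalIntegral.integral_add hf.out hg.out]

lemma circleIntegral_deriv_eq_zero {x₀ : ℂ} {R : ℝ} (hR : 0 ≤ R) {W : Set ℂ} (hW : IsOpen W)
    (hsub : sphere x₀ R ⊆ W) {h : ℂ → ℂ} (hh : DifferentiableOn ℂ h W) :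
    (∮ z in C(x₀, R), deriv h z) = 0 := by
  have hmem : ∀ θ : ℝ, circleMap x₀ R θ ∈ W := fun θ => hsub (circleMap_mem_sphere x₀ hR θ)
  have key : ∀ θ : ℝ, HasDerivAt (fun t => h (circleMap x₀ R t))
      (deriv (circleMap x₀ R) θ • deriv h (circleMap x₀ R θ)) θ := by
    intro θ
    have hd : DifferentiableAt ℂ h (circleMap x₀ R θ) :=
      hh.differentiableAt (hW.mem_nhds (hmem θ))
    have := hd.hasDerivAt.comp θ (hasDerivAt_circleMap x₀ R θ)
    rw [deriv_circleMap, smul_eq_mul, mul_comm]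
    exact this
  have hcont : Continuous fun θ : ℝ => deriv (circleMap x₀ R) θ • deriv h (circleMap x₀ R θ) := by
    have hderivh : ContinuousOn (deriv h) W := ((hh.analyticOnNhd hW).deriv).continuousOn
    have h1 : Continuous fun θ : ℝ => deriv h (circleMap x₀ R θ) :=
      hderivh.comp_continuous (continuous_circleMap x₀ R) hmem
    have h2 : Continuous fun θ : ℝ => deriv (circleMap x₀ R) θ := by
      simp only [deriv_circleMap]
      exact (continuous_circleMap 0 R).mul continuous_const
    exact h2.smul h1
  rw [circleIntegral]
  rw [intervalIntegral.integral_eq_sub_of_hasDerivAt (fun θ _ => key θ)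
    (hcont.intervalIntegrable 0 (2 * Real.pi))]
  have : circleMap x₀ R (2 * Real.pi) = circleMap x₀ R 0 := by
    simpa using (periodic_circleMap x₀ R) 0
  rw [this, sub_self]


lemma finite_zeros_s1 {x₀ : ℂ} {R : ℝ} {V : Set ℂ} (hV : IsOpen V)
    (hVc : closedBall x₀ R ⊆ V) {f : ℂ → ℂ} (hf : DifferentiableOn ℂ f V)
    (hsph : ∀ z ∈ sphere x₀ R, f z ≠ 0)
    (hsimp : ∀ z ∈ ball x₀ R, f z = 0 → deriv f z ≠ 0) :
    {z ∈ closedBall x₀ R | f z = 0}.Finite := by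
  have key : ∀ z ∈ closedBall x₀ R, ∃ ε > 0, ∀ w ∈ ball z ε, f w = 0 → w = z := by
    intro z hz
    by_cases hfz : f z = 0
    · -- z is a simple zero, hence isolated
      have hzball : z ∈ ball x₀ R := by
        rcases lt_or_eq_of_le (mem_closedBall.1 hz) with h | h
        · exact mem_ball.2 h
        · exact absurd hfz (hsph z (mem_sphere.2 h))
      have hderiv : deriv f z ≠ 0 := hsimp z hzball hfz
      have hda : DifferentiableAt ℂ f z := hf.differentiableAt (hV.mem_nhds (hVc hz))
      have hslope : Filter.Tendsto (slope f z) (nhdsWithin z {z}ᶜ) (nhds (deriv f z)) :=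
        hasDerivAt_iff_tendsto_slope.1 hda.hasDerivAt
      have hev : ∀ᶠ w in nhdsWithin z {z}ᶜ, slope f z w ≠ 0 := hslope.eventually_ne hderiv
      rw [eventually_nhdsWithin_iff] at hev
      rcases Metric.eventually_nhds_iff.1 hev with ⟨ε, hε, hball⟩
      refine ⟨ε, hε, fun w hw hfw => ?_⟩
      by_contra hne
      have := hball (mem_ball.1 hw) hne
      rw [slope_def_field, hfw, hfz] at this
      simp at this
    · -- f z ≠ 0, so f ≠ 0 near z
      have hcont : ContinuousAt f z := (hf.differentiableAt (hV.mem_nhds (hVc hz))).continuousAt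
      have hev : ∀ᶠ w in nhds z, f w ≠ 0 := hcont.eventually_ne hfz
      rcases Metric.eventually_nhds_iff.1 hev with ⟨ε, hε, hball⟩
      exact ⟨ε, hε, fun w hw hfw => absurd hfw (hball (mem_ball.1 hw))⟩
  choose! ε hε hiso using key
  have hcover : closedBall x₀ R ⊆ ⋃ z ∈ closedBall x₀ R, ball z (ε z) :=
    fun z hz => mem_biUnion hz (mem_ball_self (hε z hz))
  rcases (isCompact_closedBall x₀ R).elim_finite_subcover_image
    (fun z _ => isOpen_ball) hcover with ⟨t, hts, htf, htc⟩
  refine htf.subset fun s hs => ?_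
  obtain ⟨hs1, hs2⟩ := hs
  rcases mem_iUnion₂.1 (htc hs1) with ⟨z, hzt, hzb⟩
  have := hiso z (hts hzt) s hzb hs2
  rwa [this]

lemma hasDerivAt_param_integral
    (p q e w : ℝ → ℂ) (hp : Continuous p) (hq : Continuous q) (he : Continuous e)
    (hw : Continuous w) (t₀ : ℝ) (δ m : ℝ) (hδ : 0 < δ) (hm : 0 < m)
    (hlower : ∀ t ∈ ball t₀ δ, ∀ θ ∈ Set.Icc (0:ℝ) (2*Real.pi),
      m ≤ ‖e θ + t * w θ‖) :
    HasDerivAt (fun t : ℝ => ∫ θ in (0:ℝ)..(2*Real.pi), (p θ + t * q θ) / (e θ + t * w θ))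
      (∫ θ in (0:ℝ)..(2*Real.pi), (q θ * (e θ + t₀ * w θ) - (p θ + t₀ * q θ) * w θ) /
        (e θ + t₀ * w θ)^2) t₀ := by
  -- bounds on the compact interval
  obtain ⟨Cp, hCp⟩ := (isCompact_Icc (a := (0:ℝ)) (b := 2*Real.pi)).exists_bound_of_continuousOn
    hp.continuousOn
  obtain ⟨Cq, hCq⟩ := (isCompact_Icc (a := (0:ℝ)) (b := 2*Real.pi)).exists_bound_of_continuousOn
    hq.continuousOn
  obtain ⟨Ce, hCe⟩ := (isCompact_Icc (a := (0:ℝ)) (b := 2*Real.pi)).exists_bound_of_continuousOn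
    he.continuousOn
  obtain ⟨Cw, hCw⟩ := (isCompact_Icc (a := (0:ℝ)) (b := 2*Real.pi)).exists_bound_of_continuousOn
    hw.continuousOn
  set C : ℝ := max (max Cp Cq) (max Ce Cw) + 1 with hC
  have hC0 : 0 < C := by
    have := norm_nonneg (p 0)
    have h0 : (0:ℝ) ∈ Set.Icc (0:ℝ) (2*Real.pi) := by
      constructor <;> positivity
    have := (this.trans (hCp 0 h0))
    have hCp' : 0 ≤ Cp := this
    have : Cp ≤ max (max Cp Cq) (max Ce Cw) := le_max_of_le_left (le_max_left _ _)
    linarith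
  have hCbound : ∀ θ ∈ Set.Icc (0:ℝ) (2*Real.pi),
      ‖p θ‖ ≤ C ∧ ‖q θ‖ ≤ C ∧ ‖e θ‖ ≤ C ∧ ‖w θ‖ ≤ C := by
    intro θ hθ
    refine ⟨(hCp θ hθ).trans ?_, (hCq θ hθ).trans ?_, (hCe θ hθ).trans ?_, (hCw θ hθ).trans ?_⟩
    · have : Cp ≤ max (max Cp Cq) (max Ce Cw) := le_max_of_le_left (le_max_left _ _)
      linarith
    · have : Cq ≤ max (max Cp Cq) (max Ce Cw) := le_max_of_le_left (le_max_right _ _)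
      linarith
    · have : Ce ≤ max (max Cp Cq) (max Ce Cw) := le_max_of_le_right (le_max_left _ _)
      linarith
    · have : Cw ≤ max (max Cp Cq) (max Ce Cw) := le_max_of_le_right (le_max_right _ _)
      linarith
  set T : ℝ := |t₀| + δ with hT
  have hT0 : 0 < T := by positivity
  set B : ℝ := (C * (C + T * C) + (C + T * C) * C) / m ^ 2 with hB
  set F : ℝ → ℝ → ℂ := fun t θ => (p θ + t * q θ) / (e θ + t * w θ) with hF
  set F' : ℝ → ℝ → ℂ := fun t θ =>
    (q θ * (e θ + t * w θ) - (p θ + t * q θ) * w θ) / (e θ + t * w θ)^2 with hF'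
  have hIsub : Set.uIoc (0:ℝ) (2*Real.pi) ⊆ Set.Icc (0:ℝ) (2*Real.pi) := by
    rw [Set.uIoc_of_le (by positivity)]
    exact Set.Ioc_subset_Icc_self
  have hden_ne : ∀ t ∈ ball t₀ δ, ∀ θ ∈ Set.Icc (0:ℝ) (2*Real.pi), e θ + t * w θ ≠ 0 := by
    intro t ht θ hθ
    intro h0
    have := hlower t ht θ hθ
    rw [h0] at this
    simp at this
    linarith
  -- continuity of F t on the interval, for t in the ball
  have hFcont : ∀ t ∈ ball t₀ δ, ContinuousOn (F t) (Set.Icc (0:ℝ) (2*Real.pi)) := by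
    intro t ht
    exact ((hp.add (continuous_const.mul hq)).continuousOn).div
      ((he.add (continuous_const.mul hw)).continuousOn) (hden_ne t ht)
  have hF'cont : ContinuousOn (F' t₀) (Set.Icc (0:ℝ) (2*Real.pi)) := by
    have hden := hden_ne t₀ (mem_ball_self hδ)
    apply ContinuousOn.div
    · exact ((hq.mul (he.add (continuous_const.mul hw))).sub
        ((hp.add (continuous_const.mul hq)).mul hw)).continuousOn
    · exact ((he.add (continuous_const.mul hw)).pow 2).continuousOn
    · intro θ hθ
      exact pow_ne_zero 2 (hden θ hθ)
  have hmeas : ∀ᶠ t in nhds t₀, MeasureTheory.AEStronglyMeasurable (F t)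
      (MeasureTheory.volume.restrict (Set.uIoc (0:ℝ) (2*Real.pi))) := by
    filter_upwards [Metric.ball_mem_nhds t₀ hδ] with t ht
    exact ((hFcont t ht).mono hIsub).aestronglyMeasurable
      (measurableSet_uIoc)
  have hint : IntervalIntegrable (F t₀) MeasureTheory.volume 0 (2*Real.pi) := by
    apply ContinuousOn.intervalIntegrable
    rw [Set.uIcc_of_le (by positivity)]
    exact hFcont t₀ (mem_ball_self hδ)
  have hmeas' : MeasureTheory.AEStronglyMeasurable (F' t₀)
      (MeasureTheory.volume.restrict (Set.uIoc (0:ℝ) (2*Real.pi))) :=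
    (hF'cont.mono hIsub).aestronglyMeasurable measurableSet_uIoc
  have hbound : ∀ᵐ θ ∂MeasureTheory.volume, θ ∈ Set.uIoc (0:ℝ) (2*Real.pi) →
      ∀ t ∈ ball t₀ δ, ‖F' t θ‖ ≤ B := by
    apply MeasureTheory.ae_of_all
    intro θ hθ t ht
    have hθ' := hIsub hθ
    obtain ⟨hp', hq', he', hw'⟩ := hCbound θ hθ'
    have ht' : |t| ≤ T := by
      rw [hT]
      have : |t - t₀| < δ := by rwa [← Real.dist_eq, ← mem_ball]
      have := abs_sub_abs_le_abs_sub t t₀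
      linarith [abs_sub_comm t t₀ ▸ this]
    have hden := hlower t ht θ hθ'
    rw [hF']
    rw [norm_div]
    have hnum : ‖q θ * (e θ + t * w θ) - (p θ + t * q θ) * w θ‖ ≤
        C * (C + T * C) + (C + T * C) * C := by
      refine (norm_sub_le _ _).trans ?_
      gcongr
      · rw [norm_mul]
        refine mul_le_mul hq' ?_ (norm_nonneg _) hC0.le
        refine (norm_add_le _ _).trans ?_
        rw [norm_mul, Complex.norm_real, Real.norm_eq_abs]
        gcongr
      · rw [norm_mul]
        refine mul_le_mul ?_ hw' (norm_nonneg _) (by positivity)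
        refine (norm_add_le _ _).trans ?_
        rw [norm_mul, Complex.norm_real, Real.norm_eq_abs]
        gcongr
    have hden2 : m ^ 2 ≤ ‖(e θ + t * w θ) ^ 2‖ := by
      rw [norm_pow]
      apply pow_le_pow_left₀ hm.le
      assumption
    rw [hB]
    apply div_le_div₀ (by positivity) hnum (by positivity) hden2
  have hboundint : IntervalIntegrable (fun _ : ℝ => B) MeasureTheory.volume 0 (2*Real.pi) :=
    intervalIntegrable_const
  have hdiff : ∀ᵐ θ ∂MeasureTheory.volume, θ ∈ Set.uIoc (0:ℝ) (2*Real.pi) →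
      ∀ t ∈ ball t₀ δ, HasDerivAt (fun t => F t θ) (F' t θ) t := by
    apply MeasureTheory.ae_of_all
    intro θ hθ t ht
    have hθ' := hIsub hθ
    have hofReal : HasDerivAt (fun t : ℝ => (t : ℂ)) 1 t := by
      exact (hasDerivAt_id t).ofReal_comp
    have hnum : HasDerivAt (fun t : ℝ => p θ + (t:ℂ) * q θ) (q θ) t := by
      simpa using (hofReal.mul_const (q θ)).const_add (p θ)
    have hden : HasDerivAt (fun t : ℝ => e θ + (t:ℂ) * w θ) (w θ) t := by
      simpa using (hofReal.mul_const (w θ)).const_add (e θ)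
    exact hnum.div hden (hden_ne t ht θ hθ')
  exact (intervalIntegral.hasDerivAt_integral_of_dominated_loc_of_deriv_le (Metric.ball_mem_nhds t₀ hδ) hmeas hint hmeas'
    hbound hboundint hdiff).2

lemma count_zeros {x₀ : ℂ} {R : ℝ} (hR : 0 < R) {V : Set ℂ} (hV : IsOpen V)
    (hVc : closedBall x₀ R ⊆ V) :
    ∀ (n : ℕ) (f : ℂ → ℂ), DifferentiableOn ℂ f V →
    (∀ z ∈ sphere x₀ R, f z ≠ 0) →
    (∀ z ∈ ball x₀ R, f z = 0 → deriv f z ≠ 0) →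
    {z ∈ closedBall x₀ R | f z = 0}.ncard = n →
    (∮ z in C(x₀, R), deriv f z / f z) = 2 * Real.pi * Complex.I * n := by
  intro n
  induction n with
  | zero =>
    intro f hf hsph hsimp hcard
    have hfin := finite_zeros_s1 hV hVc hf hsph hsimp
    have hempty : {z ∈ closedBall x₀ R | f z = 0} = ∅ :=
      (Set.ncard_eq_zero hfin).1 hcard
    have hne : ∀ z ∈ closedBall x₀ R, f z ≠ 0 := fun z hz hfz =>
      (Set.eq_empty_iff_forall_notMem.1 hempty z) ⟨hz, hfz⟩
    set W : Set ℂ := V ∩ f ⁻¹' ({0}ᶜ) with hW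
    have hWopen : IsOpen W := hf.continuousOn.isOpen_inter_preimage hV isOpen_compl_singleton
    have hsubW : closedBall x₀ R ⊆ W := fun z hz => ⟨hVc hz, hne z hz⟩
    have hder : DifferentiableOn ℂ (deriv f) V := ((hf.analyticOnNhd hV).deriv).differentiableOn
    have hg : DifferentiableOn ℂ (fun z => deriv f z / f z) W :=
      (hder.mono inter_subset_left).div (hf.mono inter_subset_left) fun z hz => hz.2
    have := Complex.circleIntegral_eq_zero_of_differentiable_on_off_countable hR.le
      countable_empty (hg.continuousOn.mono hsubW)
      (fun z hz => hg.differentiableAt (hWopen.mem_nhds (hsubW (ball_subset_closedBall hz.1))))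
    simpa using this
  | succ n ih =>
    intro f hf hsph hsimp hcard
    have hfin := finite_zeros_s1 hV hVc hf hsph hsimp
    obtain ⟨z₁, hz₁⟩ : {z ∈ closedBall x₀ R | f z = 0}.Nonempty := by
      apply Set.nonempty_of_ncard_ne_zero; omega
    obtain ⟨hz₁cb, hz₁f⟩ := hz₁
    have hz₁ball : z₁ ∈ ball x₀ R := by
      rcases lt_or_eq_of_le (mem_closedBall.1 hz₁cb) with h | h
      · exact mem_ball.2 h
      · exact absurd hz₁f (hsph z₁ (mem_sphere.2 h))
    set Q : ℂ → ℂ := dslope f z₁ with hQdef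
    have hQdiff : DifferentiableOn ℂ Q V :=
      (differentiableOn_dslope (hV.mem_nhds (hVc hz₁cb))).2 hf
    have feq : ∀ z, f z = (z - z₁) * Q z := by
      intro z
      have := sub_smul_dslope f z₁ z
      rw [hz₁f, sub_zero] at this
      rw [← this, smul_eq_mul]
    have hQz₁ : Q z₁ ≠ 0 := by
      rw [hQdef, dslope_same]
      exact hsimp z₁ hz₁ball hz₁f
    have hQsph : ∀ z ∈ sphere x₀ R, Q z ≠ 0 := by
      intro z hz hQz
      exact hsph z hz (by rw [feq z, hQz, mul_zero])
    have hQsimp : ∀ z ∈ ball x₀ R, Q z = 0 → deriv Q z ≠ 0 := by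
      intro z hz hQz
      have hne : z ≠ z₁ := fun h => hQz₁ (h ▸ hQz)
      have hfz : f z = 0 := by rw [feq z, hQz, mul_zero]
      have hder : deriv f z ≠ 0 := hsimp z hz hfz
      have hev : Q =ᶠ[nhds z] fun w => f w * (w - z₁)⁻¹ := by
        filter_upwards [eventually_ne_nhds hne] with w hw
        rw [hQdef, dslope_of_ne f hw, slope_def_field, hz₁f, sub_zero, div_eq_mul_inv]
      have h1 : HasDerivAt f (deriv f z) z :=
        (hf.differentiableAt (hV.mem_nhds (hVc (ball_subset_closedBall hz)))).hasDerivAt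
      have h2 : HasDerivAt (fun w => (w - z₁)⁻¹) (-1 / (z - z₁) ^ 2) z := by
        exact ((hasDerivAt_id' z).sub_const z₁).inv (sub_ne_zero.2 hne)
      have h3 : HasDerivAt (fun w => f w * (w - z₁)⁻¹)
          (deriv f z * (z - z₁)⁻¹ + f z * (-1 / (z - z₁) ^ 2)) z := h1.mul h2
      rw [hev.deriv_eq, h3.deriv, hfz, zero_mul, add_zero]
      exact mul_ne_zero hder (inv_ne_zero (sub_ne_zero.2 hne))
    have hSQ : {z ∈ closedBall x₀ R | Q z = 0} =
        {z ∈ closedBall x₀ R | f z = 0} \ {z₁} := by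
      ext z
      constructor
      · rintro ⟨hzc, hQz⟩
        have hne : z ≠ z₁ := fun h => hQz₁ (h ▸ hQz)
        exact ⟨⟨hzc, by rw [feq z, hQz, mul_zero]⟩, hne⟩
      · rintro ⟨⟨hzc, hfz⟩, hne⟩
        refine ⟨hzc, ?_⟩
        have := feq z
        rw [hfz] at this
        rcases mul_eq_zero.1 this.symm with h | h
        · exact absurd (sub_eq_zero.1 h) (by simpa using hne)
        · exact h
    have hQcard : {z ∈ closedBall x₀ R | Q z = 0}.ncard = n := by
      rw [hSQ, Set.ncard_diff_singleton_of_mem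
        (show z₁ ∈ {z | z ∈ closedBall x₀ R ∧ f z = 0} from ⟨hz₁cb, hz₁f⟩), hcard]
      omega
    have IH := ih Q hQdiff hQsph hQsimp hQcard
    -- integrand identity on the sphere
    have hEq : EqOn (fun z => deriv f z / f z)
        (fun z => (z - z₁)⁻¹ + deriv Q z / Q z) (sphere x₀ R) := by
      intro z hz
      have hzV : z ∈ V := hVc (sphere_subset_closedBall hz)
      have hzne : z ≠ z₁ := ne_of_mem_of_not_mem hz
        (fun h => absurd (mem_sphere.1 h) (ne_of_lt (mem_ball.1 hz₁ball)))
      have hQz : Q z ≠ 0 := hQsph z hz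
      have hQd : HasDerivAt Q (deriv Q z) z :=
        (hQdiff.differentiableAt (hV.mem_nhds hzV)).hasDerivAt
      have hfd : HasDerivAt f (1 * Q z + (z - z₁) * deriv Q z) z := by
        have : HasDerivAt (fun w => (w - z₁) * Q w) (1 * Q z + (z - z₁) * deriv Q z) z :=
          (((hasDerivAt_id z).sub_const z₁)).mul hQd
        exact (funext feq : f = fun w => (w - z₁) * Q w) ▸ this
      have hdf : deriv f z = Q z + (z - z₁) * deriv Q z := by
        rw [hfd.deriv, one_mul]
      show deriv f z / f z = (z - z₁)⁻¹ + deriv Q z / Q z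
      rw [hdf, feq z]
      field_simp [sub_ne_zero.2 hzne, hQz]
    have hint1 : CircleIntegrable (fun z => (z - z₁)⁻¹) x₀ R := by
      refine ContinuousOn.circleIntegrable hR.le ?_
      exact (continuousOn_id.sub continuousOn_const).inv₀ fun z hz =>
        sub_ne_zero.2 (ne_of_mem_of_not_mem hz
          (fun h => absurd (mem_sphere.1 h) (ne_of_lt (mem_ball.1 hz₁ball))))
    have hint2 : CircleIntegrable (fun z => deriv Q z / Q z) x₀ R := by
      refine ContinuousOn.circleIntegrable hR.le ?_
      have hsubV : sphere x₀ R ⊆ V := fun z hz => hVc (sphere_subset_closedBall hz)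
      exact (((hQdiff.analyticOnNhd hV).deriv).continuousOn.mono hsubV).div
        (hQdiff.continuousOn.mono hsubV) fun z hz => hQsph z hz
    rw [circleIntegral.integral_congr hR.le hEq, circleIntegral_add' hint1 hint2,
      circleIntegral.integral_sub_inv_of_mem_ball hz₁ball, IH]
    push_cast
    ring

lemma winding_one {x₀ : ℂ} {R : ℝ} (hR : 0 < R) {V : Set ℂ} (hV : IsOpen V)
    (hVs : sphere x₀ R ⊆ V) {f : ℂ → ℂ} (hf : DifferentiableOn ℂ f V) {w : ℂ}
    (hw : w ∈ ball x₀ R)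
    (hclose : ∀ z ∈ sphere x₀ R, ‖f z - (z - w)‖ < ‖z - w‖) :
    (∮ z in C(x₀, R), deriv f z / f z) = 2 * Real.pi * Complex.I := by
  set φ : ℂ → ℝ := fun z => ‖f z - (z - w)‖ - ‖z - w‖ with hφ
  have hφc : ContinuousOn φ V := by
    apply ContinuousOn.sub
    · exact (continuous_norm.comp_continuousOn
        (hf.continuousOn.sub ((continuousOn_id.sub continuousOn_const))))
    · exact (continuous_norm.comp_continuousOn
        ((continuousOn_id.sub continuousOn_const)))
  set W : Set ℂ := V ∩ φ ⁻¹' (Iio 0) with hW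
  have hWopen : IsOpen W := hφc.isOpen_inter_preimage hV isOpen_Iio
  have hsubW : sphere x₀ R ⊆ W := fun z hz =>
    ⟨hVs hz, by simpa [hφ, sub_neg] using hclose z hz⟩
  -- basic facts on W
  have hWfacts : ∀ z ∈ W, z ≠ w ∧ f z ≠ 0 ∧ f z / (z - w) ∈ slitPlane := by
    intro z hz
    have hlt : ‖f z - (z - w)‖ < ‖z - w‖ := by
      have := hz.2
      simpa [hφ, sub_neg] using this
    have hzw : z ≠ w := by
      intro h
      rw [h, sub_self] at hlt
      simpa using (norm_nonneg _).not_gt (by simpa using hlt)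
    have hfz : f z ≠ 0 := by
      intro h
      rw [h, zero_sub, norm_neg] at hlt
      exact lt_irrefl _ hlt
    have hslit : f z / (z - w) ∈ slitPlane := by
      have hzw' : (z - w) ≠ 0 := sub_ne_zero.2 hzw
      have : ‖f z / (z - w) - 1‖ < 1 := by
        rw [div_sub_one hzw']
        rw [norm_div]
        rw [div_lt_one (norm_pos_iff.2 hzw')]
        exact hlt
      have := Complex.mem_slitPlane_of_norm_lt_one this
      simpa using this
    exact ⟨hzw, hfz, hslit⟩
  set h : ℂ → ℂ := fun z => Complex.log (f z / (z - w)) with hh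
  have hfa : ∀ z ∈ W, DifferentiableAt ℂ f z := fun z hz =>
    hf.differentiableAt (hV.mem_nhds hz.1)
  have hhd : DifferentiableOn ℂ h W := by
    intro z hz
    obtain ⟨hzw, hfz, hslit⟩ := hWfacts z hz
    have hg : DifferentiableAt ℂ (fun z => f z / (z - w)) z :=
      (hfa z hz).div ((differentiableAt_id.sub (differentiableAt_const w))) (sub_ne_zero.2 hzw)
    exact ((Complex.differentiableAt_log hslit).comp z hg).differentiableWithinAt
  have hEq : EqOn (fun z => deriv f z / f z)
      (fun z => (z - w)⁻¹ + deriv h z) (sphere x₀ R) := by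
    intro z hz
    have hzW := hsubW hz
    obtain ⟨hzw, hfz, hslit⟩ := hWfacts z hzW
    have hzw' : (z : ℂ) - w ≠ 0 := sub_ne_zero.2 hzw
    have hfd : HasDerivAt f (deriv f z) z := (hfa z hzW).hasDerivAt
    have hgd : HasDerivAt (fun z => f z / (z - w))
        ((deriv f z * (z - w) - f z * 1) / (z - w) ^ 2) z :=
      hfd.div ((hasDerivAt_id z).sub_const w) hzw'
    have hld : HasDerivAt h ((f z / (z - w))⁻¹ *
        ((deriv f z * (z - w) - f z * 1) / (z - w) ^ 2)) z := by
      have := (Complex.hasDerivAt_log hslit).comp z hgd; exact this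
    show deriv f z / f z = (z - w)⁻¹ + deriv h z
    rw [hld.deriv]
    field_simp
    ring
  have hint1 : CircleIntegrable (fun z => (z - w)⁻¹) x₀ R := by
    refine ContinuousOn.circleIntegrable hR.le ?_
    exact (continuousOn_id.sub continuousOn_const).inv₀ fun z hz =>
      sub_ne_zero.2 (ne_of_mem_of_not_mem hz
        (fun hmem => absurd (mem_sphere.1 hmem) (ne_of_lt (mem_ball.1 hw))))
  have hint2 : CircleIntegrable (fun z => deriv h z) x₀ R := by
    refine ContinuousOn.circleIntegrable hR.le ?_
    have hcont : ContinuousOn (fun z => deriv f z / f z - (z - w)⁻¹) (sphere x₀ R) := by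
      apply ContinuousOn.sub
      · exact (((hf.analyticOnNhd hV).deriv).continuousOn.mono hVs).div
          (hf.continuousOn.mono hVs) fun z hz => (hWfacts z (hsubW hz)).2.1
      · exact (continuousOn_id.sub continuousOn_const).inv₀ fun z hz =>
          sub_ne_zero.2 (ne_of_mem_of_not_mem hz
            (fun hmem => absurd (mem_sphere.1 hmem) (ne_of_lt (mem_ball.1 hw))))
    apply hcont.congr
    intro z hz
    have := hEq hz
    simp only at this
    rw [eq_sub_iff_add_eq, add_comm, ← this]
  calc (∮ z in C(x₀, R), deriv f z / f z)
      = ∮ z in C(x₀, R), ((z - w)⁻¹ + deriv h z) :=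
        circleIntegral.integral_congr hR.le hEq
    _ = (∮ z in C(x₀, R), (z - w)⁻¹) + ∮ z in C(x₀, R), deriv h z :=
        circleIntegral_add' hint1 hint2
    _ = 2 * Real.pi * Complex.I := by
        rw [circleIntegral.integral_sub_inv_of_mem_ball hw,
          circleIntegral_deriv_eq_zero hR.le hWopen hsubW hhd, add_zero]

/-- Theorem 3.1 of the paper: the contour-integral formula (6)
`u(x,t) = (1/(2πi)) ∮_{|z-x₀|=R} (1 + t·c'(u₀(z))·u₀'(z))·u₀(z) / (z - x + t·c(u₀(z))) dz`
solves `u_t + c(u)·u_x = 0` with `u(x,0) = u₀(x)`. -/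
theorem explicit_solution_solves_IVP
    (x₀ : ℝ) (R : ℝ) (hR : 0 < R)
    (u₀ : ℂ → ℂ) (U : Set ℂ) (hU : IsOpen U)
    (hUc : closedBall (x₀ : ℂ) R ⊆ U) (hu₀ : DifferentiableOn ℂ u₀ U)
    (c : ℂ → ℂ) (hc : Differentiable ℂ c)
    (u : ℝ → ℝ → ℂ)
    (hu : ∀ x t : ℝ, u x t = (1 / (2 * Real.pi * Complex.I)) *
      ∮ z in C((x₀ : ℂ), R),
        (1 + (t : ℂ) * deriv c (u₀ z) * deriv u₀ z) * u₀ z /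
          (z - (x : ℂ) + (t : ℂ) * c (u₀ z)))
    (xs ts : ℝ) (hxs : |xs - x₀| < R)
    (hsep : ∀ z : ℂ, ‖z - (x₀ : ℂ)‖ = R →
      ‖(ts : ℂ) * c (u₀ z)‖ < ‖z - (xs : ℂ)‖)
    (hsimple : ∀ zs : ℂ, zs ∈ ball (x₀ : ℂ) R →
      zs - (xs : ℂ) + (ts : ℂ) * c (u₀ zs) = 0 →
      1 + (ts : ℂ) * deriv c (u₀ zs) * deriv u₀ zs ≠ 0) :
    (∃ ux ut : ℂ,
      HasDerivAt (fun x : ℝ => u x ts) ux xs ∧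
      HasDerivAt (fun t : ℝ => u xs t) ut ts ∧
      ut + c (u xs ts) * ux = 0) ∧
    (∀ x : ℝ, |x - x₀| < R → u x 0 = u₀ (x : ℂ)) := by
  have hπ : (2 * (Real.pi:ℂ) * I) ≠ 0 := by
    simp [Real.pi_ne_zero, I_ne_zero]
  set D : ℂ → ℂ := fun z => z - (xs:ℂ) + (ts:ℂ) * c (u₀ z) with hDdef
  set G : ℂ → ℂ := fun z => 1 + (ts:ℂ) * deriv c (u₀ z) * deriv u₀ z with hGdef
  set qt : ℂ → ℂ := fun z => deriv c (u₀ z) * deriv u₀ z * u₀ z with hqtdef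
  have hUs : sphere ((x₀:ℝ):ℂ) R ⊆ U := fun z hz => hUc (sphere_subset_closedBall hz)
  have hu₀at : ∀ z ∈ U, DifferentiableAt ℂ u₀ z := fun z hz =>
    hu₀.differentiableAt (hU.mem_nhds hz)
  have hDd : ∀ z ∈ U, HasDerivAt D (G z) z := by
    intro z hz
    have h1 : HasDerivAt u₀ (deriv u₀ z) z := (hu₀at z hz).hasDerivAt
    have h2 : HasDerivAt c (deriv c (u₀ z)) (u₀ z) := (hc (u₀ z)).hasDerivAt
    have h3 : HasDerivAt (fun z => c (u₀ z)) (deriv c (u₀ z) * deriv u₀ z) z := h2.comp z h1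
    have h4 : HasDerivAt (fun z => z - (xs:ℂ) + (ts:ℂ) * c (u₀ z))
        (1 + (ts:ℂ) * (deriv c (u₀ z) * deriv u₀ z)) z :=
      ((hasDerivAt_id z).sub_const _).add (h3.const_mul _)
    simpa [hGdef, mul_assoc] using h4
  have hderivD : ∀ z ∈ U, deriv D z = G z := fun z hz => (hDd z hz).deriv
  have hDdiff : DifferentiableOn ℂ D U := fun z hz =>
    (hDd z hz).differentiableAt.differentiableWithinAt
  have hsep' : ∀ z ∈ sphere ((x₀:ℝ):ℂ) R,
      ‖(ts:ℂ) * c (u₀ z)‖ < ‖z - (xs:ℂ)‖ := by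
    intro z hz
    exact hsep z (by rw [← Complex.dist_eq]; exact mem_sphere.1 hz)
  have hDsph : ∀ z ∈ sphere ((x₀:ℝ):ℂ) R, D z ≠ 0 := by
    intro z hz h0
    have heq : (ts:ℂ) * c (u₀ z) = -(z - (xs:ℂ)) := by
      have : z - (xs:ℂ) + (ts:ℂ) * c (u₀ z) = 0 := h0
      linear_combination this
    have h2 := hsep' z hz
    rw [heq, norm_neg] at h2
    exact lt_irrefl _ h2
  have hxsball : ((xs:ℝ):ℂ) ∈ ball ((x₀:ℝ):ℂ) R := by
    rw [mem_ball, Complex.dist_eq, ← Complex.ofReal_sub, Complex.norm_real, Real.norm_eq_abs]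
    exact hxs
  have hclose : ∀ z ∈ sphere ((x₀:ℝ):ℂ) R,
      ‖D z - (z - ((xs:ℝ):ℂ))‖ < ‖z - ((xs:ℝ):ℂ)‖ := by
    intro z hz
    have : D z - (z - ((xs:ℝ):ℂ)) = (ts:ℂ) * c (u₀ z) := by
      simp only [hDdef]; ring
    rw [this]
    exact hsep' z hz
  have hDsimp : ∀ z ∈ ball ((x₀:ℝ):ℂ) R, D z = 0 → deriv D z ≠ 0 := by
    intro z hz h0
    rw [hderivD z (hUc (ball_subset_closedBall hz))]
    exact hsimple z hz h0
  have hwind := winding_one hR hU hUs hDdiff hxsball hclose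
  have hcount := count_zeros hR hU hUc ({z ∈ closedBall ((x₀:ℝ):ℂ) R | D z = 0}.ncard)
    D hDdiff hDsph hDsimp rfl
  have hn1 : {z ∈ closedBall ((x₀:ℝ):ℂ) R | D z = 0}.ncard = 1 := by
    have h2 : (2 * Real.pi * Complex.I) *
        (({z ∈ closedBall ((x₀:ℝ):ℂ) R | D z = 0}.ncard : ℂ)) = 2 * Real.pi * Complex.I * 1 := by
      rw [mul_one, ← hcount, hwind]
    have := mul_left_cancel₀ hπ h2
    exact_mod_cast this
  obtain ⟨zs, hzs⟩ := Set.ncard_eq_one.1 hn1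
  have hzsmem : zs ∈ {z ∈ closedBall ((x₀:ℝ):ℂ) R | D z = 0} := by
    rw [hzs]; exact mem_singleton _
  obtain ⟨hzscb, hDzs⟩ := hzsmem
  have hzsball : zs ∈ ball ((x₀:ℝ):ℂ) R := by
    rcases lt_or_eq_of_le (mem_closedBall.1 hzscb) with h | h
    · exact mem_ball.2 h
    · exact absurd hDzs (hDsph zs (mem_sphere.2 h))
  have hzsU : zs ∈ U := hUc hzscb
  have hGzs : G zs ≠ 0 := by
    have := hDsimp zs hzsball hDzs
    rwa [hderivD zs hzsU] at this
  set P : ℂ → ℂ := dslope D zs with hPdef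
  have hPdiff : DifferentiableOn ℂ P U := (differentiableOn_dslope (hU.mem_nhds hzsU)).2 hDdiff
  have Peq : ∀ z, D z = (z - zs) * P z := by
    intro z
    have := sub_smul_dslope D zs z
    rw [hDzs, sub_zero] at this
    rw [← this, smul_eq_mul]
  have hPzs : P zs = G zs := by
    rw [hPdef, dslope_same]
    exact hderivD zs hzsU
  have hPne : ∀ z ∈ closedBall ((x₀:ℝ):ℂ) R, P z ≠ 0 := by
    intro z hz hP0
    by_cases hzz : z = zs
    · rw [hzz, hPzs] at hP0; exact hGzs hP0
    · have hD0 : D z = 0 := by rw [Peq z, hP0, mul_zero]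
      have hmem : z ∈ {z ∈ closedBall ((x₀:ℝ):ℂ) R | D z = 0} := ⟨hz, hD0⟩
      rw [hzs] at hmem
      exact hzz hmem
  -- Cauchy formula helper
  have cauchy : ∀ g : ℂ → ℂ, DifferentiableOn ℂ g U →
      (∮ z in C(((x₀:ℝ):ℂ), R), g z / P z / (z - zs)) =
        2 * Real.pi * Complex.I * (g zs / P zs) := by
    intro g hg
    apply Complex.circleIntegral_div_sub_of_differentiable_on_off_countable countable_empty
      hzsball
    · exact (hg.continuousOn.mono hUc).div (hPdiff.continuousOn.mono hUc) hPne
    · intro z hz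
      have hzU : z ∈ U := hUc (ball_subset_closedBall hz.1)
      exact (hg.differentiableAt (hU.mem_nhds hzU)).div
        (hPdiff.differentiableAt (hU.mem_nhds hzU)) (hPne z (ball_subset_closedBall hz.1))
  -- by parts helper
  set W : Set ℂ := U ∩ D ⁻¹' ({0}ᶜ) with hWdef
  have hWopen : IsOpen W := hDdiff.continuousOn.isOpen_inter_preimage hU isOpen_compl_singleton
  have hWs : sphere ((x₀:ℝ):ℂ) R ⊆ W := fun z hz => ⟨hUs hz, hDsph z hz⟩
  have hWne : ∀ z ∈ W, D z ≠ 0 := fun z hz => hz.2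
  have byparts : ∀ g g' : ℂ → ℂ, (∀ z ∈ U, HasDerivAt g (g' z) z) → ContinuousOn g' U →
      (∮ z in C(((x₀:ℝ):ℂ), R), G z * g z / D z ^ 2) =
        ∮ z in C(((x₀:ℝ):ℂ), R), g' z / D z := by
    intro g g' hg hg'c
    set h : ℂ → ℂ := fun z => -(g z / D z) with hhdef
    have hhW : ∀ z ∈ W, HasDerivAt h (-((g' z * D z - g z * G z) / D z ^ 2)) z := by
      intro z hz
      exact ((hg z hz.1).div (hDd z hz.1) (hWne z hz)).neg
    have hhdiff : DifferentiableOn ℂ h W := fun z hz =>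
      (hhW z hz).differentiableAt.differentiableWithinAt
    have hEq : EqOn (fun z => G z * g z / D z ^ 2)
        (fun z => g' z / D z + deriv h z) (sphere ((x₀:ℝ):ℂ) R) := by
      intro z hz
      have hzW := hWs hz
      have hD := hDsph z hz
      show G z * g z / D z ^ 2 = g' z / D z + deriv h z
      rw [(hhW z hzW).deriv]
      field_simp
      ring
    have hint1 : CircleIntegrable (fun z => g' z / D z) ((x₀:ℝ):ℂ) R :=
      ContinuousOn.circleIntegrable hR.le
        ((hg'c.mono hUs).div (hDdiff.continuousOn.mono hUs) hDsph)
    have hgcont : ContinuousOn g U := fun z hz => ((hg z hz).differentiableAt).continuousAt.continuousWithinAt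
    have hGcont' : ContinuousOn G U := fun z hz => by
      have h1 : DifferentiableAt ℂ (fun z => deriv c (u₀ z)) z := by
        have hcd : Differentiable ℂ (deriv c) := by
          have := ((hc.differentiableOn (s := Set.univ)).analyticOnNhd
            isOpen_univ).deriv.differentiableOn
          rwa [differentiableOn_univ] at this
        exact (hcd _).comp z (hu₀at z hz)
      have h2 : DifferentiableAt ℂ (deriv u₀) z :=
        ((hu₀.analyticOnNhd hU).deriv.differentiableOn).differentiableAt (hU.mem_nhds hz)
      exact (((differentiableAt_const _).add
        (((h1.const_mul _)).mul h2)).continuousAt).continuousWithinAt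
    have hint2 : CircleIntegrable (fun z => deriv h z) ((x₀:ℝ):ℂ) R := by
      refine ContinuousOn.circleIntegrable hR.le ?_
      have hcont : ContinuousOn (fun z => -((g' z * D z - g z * G z) / D z ^ 2))
          (sphere ((x₀:ℝ):ℂ) R) := by
        apply ContinuousOn.neg
        apply ContinuousOn.div
        · exact ((hg'c.mono hUs).mul (hDdiff.continuousOn.mono hUs)).sub
            ((hgcont.mono hUs).mul (hGcont'.mono hUs))
        · exact (hDdiff.continuousOn.mono hUs).pow 2
        · exact fun z hz => pow_ne_zero 2 (hDsph z hz)
      apply hcont.congr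
      intro z hz
      exact (hhW z (hWs hz)).deriv
    calc (∮ z in C(((x₀:ℝ):ℂ), R), G z * g z / D z ^ 2)
        = ∮ z in C(((x₀:ℝ):ℂ), R), (g' z / D z + deriv h z) :=
          circleIntegral.integral_congr hR.le hEq
      _ = (∮ z in C(((x₀:ℝ):ℂ), R), g' z / D z) + ∮ z in C(((x₀:ℝ):ℂ), R), deriv h z :=
          circleIntegral_add' hint1 hint2
      _ = ∮ z in C(((x₀:ℝ):ℂ), R), g' z / D z := by
          rw [circleIntegral_deriv_eq_zero hR.le hWopen hWs hhdiff, add_zero]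
  -- differentiability/continuity of auxiliary functions
  have hcd : Differentiable ℂ (deriv c) := by
    have := ((hc.differentiableOn (s := Set.univ)).analyticOnNhd
      isOpen_univ).deriv.differentiableOn
    rwa [differentiableOn_univ] at this
  have hdu₀diff : DifferentiableOn ℂ (deriv u₀) U :=
    (hu₀.analyticOnNhd hU).deriv.differentiableOn
  have hdu₀cont : ContinuousOn (deriv u₀) U := (hu₀.analyticOnNhd hU).deriv.continuousOn
  have hGat : ∀ z ∈ U, DifferentiableAt ℂ G z := by
    intro z hz
    have h1 : DifferentiableAt ℂ (fun z => deriv c (u₀ z)) z := (hcd _).comp z (hu₀at z hz)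
    have h2 : DifferentiableAt ℂ (deriv u₀) z := hdu₀diff.differentiableAt (hU.mem_nhds hz)
    exact (differentiableAt_const _).add ((h1.const_mul _).mul h2)
  have hGdiff : DifferentiableOn ℂ G U := fun z hz =>
    (hGat z hz).differentiableWithinAt
  have hGcont : ContinuousOn G U := fun z hz => (hGat z hz).continuousAt.continuousWithinAt
  have hqtat : ∀ z ∈ U, DifferentiableAt ℂ qt z := by
    intro z hz
    have h1 : DifferentiableAt ℂ (fun z => deriv c (u₀ z)) z := (hcd _).comp z (hu₀at z hz)
    have h2 : DifferentiableAt ℂ (deriv u₀) z := hdu₀diff.differentiableAt (hU.mem_nhds hz)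
    exact (h1.mul h2).mul (hu₀at z hz)
  have hqtdiff : DifferentiableOn ℂ qt U := fun z hz => (hqtat z hz).differentiableWithinAt
  have hqtcont : ContinuousOn qt U := fun z hz => (hqtat z hz).continuousAt.continuousWithinAt
  -- the four integral evaluations
  have I1 : (∮ z in C(((x₀:ℝ):ℂ), R), G z * u₀ z / D z) =
      2 * Real.pi * Complex.I * u₀ zs := by
    have hfun : (fun z => G z * u₀ z / D z) =
        fun z => (G z * u₀ z / P z) / (z - zs) := by
      funext z
      rw [Peq z, div_div, mul_comm (z - zs)]
    rw [hfun, cauchy (fun z => G z * u₀ z) (hGdiff.mul hu₀), hPzs, mul_comm (G zs), mul_div_assoc,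
      div_self hGzs, mul_one]
  have I2 : (∮ z in C(((x₀:ℝ):ℂ), R), deriv u₀ z / D z) =
      2 * Real.pi * Complex.I * (deriv u₀ zs / G zs) := by
    have hfun : (fun z => deriv u₀ z / D z) =
        fun z => (deriv u₀ z / P z) / (z - zs) := by
      funext z
      rw [Peq z, div_div, mul_comm (z - zs)]
    rw [hfun, cauchy _ hdu₀diff, hPzs]
  have I3 : (∮ z in C(((x₀:ℝ):ℂ), R), qt z / D z) =
      2 * Real.pi * Complex.I * (qt zs / G zs) := by
    have hfun : (fun z => qt z / D z) = fun z => (qt z / P z) / (z - zs) := by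
      funext z
      rw [Peq z, div_div, mul_comm (z - zs)]
    rw [hfun, cauchy _ hqtdiff, hPzs]
  have I4 : (∮ z in C(((x₀:ℝ):ℂ), R),
        (deriv u₀ z * c (u₀ z) + u₀ z * (deriv c (u₀ z) * deriv u₀ z)) / D z) =
      2 * Real.pi * Complex.I *
        ((deriv u₀ zs * c (u₀ zs) + u₀ zs * (deriv c (u₀ zs) * deriv u₀ zs)) / G zs) := by
    have hdiff : DifferentiableOn ℂ
        (fun z => deriv u₀ z * c (u₀ z) + u₀ z * (deriv c (u₀ z) * deriv u₀ z)) U := by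
      intro z hz
      have h1 : DifferentiableAt ℂ (fun z => deriv c (u₀ z)) z := (hcd _).comp z (hu₀at z hz)
      have h2 : DifferentiableAt ℂ (deriv u₀) z := hdu₀diff.differentiableAt (hU.mem_nhds hz)
      have h3 : DifferentiableAt ℂ (fun z => c (u₀ z)) z := (hc _).comp z (hu₀at z hz)
      exact ((h2.mul h3).add ((hu₀at z hz).mul (h1.mul h2))).differentiableWithinAt
    have hfun : (fun z => (deriv u₀ z * c (u₀ z) + u₀ z * (deriv c (u₀ z) * deriv u₀ z)) / D z) =
        fun z => ((deriv u₀ z * c (u₀ z) + u₀ z * (deriv c (u₀ z) * deriv u₀ z)) / P z) /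
          (z - zs) := by
      funext z
      rw [Peq z, div_div, mul_comm (z - zs)]
    rw [hfun, cauchy _ hdiff, hPzs]
  -- by parts applications
  have B1 : (∮ z in C(((x₀:ℝ):ℂ), R), G z * u₀ z / D z ^ 2) =
      ∮ z in C(((x₀:ℝ):ℂ), R), deriv u₀ z / D z :=
    byparts u₀ (deriv u₀) (fun z hz => (hu₀at z hz).hasDerivAt) hdu₀cont
  have B2 : (∮ z in C(((x₀:ℝ):ℂ), R), G z * (u₀ z * c (u₀ z)) / D z ^ 2) =
      ∮ z in C(((x₀:ℝ):ℂ), R),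
        (deriv u₀ z * c (u₀ z) + u₀ z * (deriv c (u₀ z) * deriv u₀ z)) / D z := by
    apply byparts
    · intro z hz
      have h1 : HasDerivAt u₀ (deriv u₀ z) z := (hu₀at z hz).hasDerivAt
      have h3 : HasDerivAt (fun z => c (u₀ z)) (deriv c (u₀ z) * deriv u₀ z) z :=
        ((hc (u₀ z)).hasDerivAt).comp z h1
      exact h1.mul h3
    · intro z hz
      have h1 : DifferentiableAt ℂ (fun z => deriv c (u₀ z)) z := (hcd _).comp z (hu₀at z hz)
      have h2 : DifferentiableAt ℂ (deriv u₀) z := hdu₀diff.differentiableAt (hU.mem_nhds hz)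
      have h3 : DifferentiableAt ℂ (fun z => c (u₀ z)) z := (hc _).comp z (hu₀at z hz)
      exact ((h2.mul h3).add ((hu₀at z hz).mul (h1.mul h2))).continuousAt.continuousWithinAt
  -- circle parametrization and continuity along it
  set γ : ℝ → ℂ := circleMap ((x₀:ℝ):ℂ) R with hγdef
  set dγ : ℝ → ℂ := fun θ => deriv (circleMap ((x₀:ℝ):ℂ) R) θ with hdγdef
  have hγcont : Continuous γ := continuous_circleMap _ _
  have hdγcont : Continuous dγ := by
    simp only [hdγdef, deriv_circleMap]
    exact (continuous_circleMap 0 R).mul continuous_const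
  have hγsphere : ∀ θ, γ θ ∈ sphere ((x₀:ℝ):ℂ) R := fun θ =>
    circleMap_mem_sphere _ hR.le θ
  have hγU : ∀ θ, γ θ ∈ U := fun θ => hUs (hγsphere θ)
  have hu₀γ : Continuous (fun θ => u₀ (γ θ)) :=
    hu₀.continuousOn.comp_continuous hγcont hγU
  have hcu₀γ : Continuous (fun θ => c (u₀ (γ θ))) := hc.continuous.comp hu₀γ
  have hGγ : Continuous (fun θ => G (γ θ)) := hGcont.comp_continuous hγcont hγU
  have hqtγ : Continuous (fun θ => qt (γ θ)) := hqtcont.comp_continuous hγcont hγU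
  -- uniform lower bound for |D| on the sphere
  obtain ⟨m, hm0, hmD⟩ : ∃ m > 0, ∀ z ∈ sphere ((x₀:ℝ):ℂ) R, m ≤ ‖D z‖ := by
    obtain ⟨z0, hz0, hz0min⟩ := (isCompact_sphere ((x₀:ℝ):ℂ) R).exists_isMinOn
      (NormedSpace.sphere_nonempty.2 hR.le)
      (continuous_norm.comp_continuousOn (hDdiff.continuousOn.mono hUs))
    exact ⟨‖D z0‖, norm_pos_iff.2 (hDsph z0 hz0),
      fun z hz => isMinOn_iff.1 hz0min z hz⟩
  -- x-derivative
  have hux : HasDerivAt (fun x : ℝ => u x ts)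
      ((1 / (2 * Real.pi * Complex.I)) *
        ∮ z in C(((x₀:ℝ):ℂ), R), G z * u₀ z / D z ^ 2) xs := by
    set p1 : ℝ → ℂ := fun θ => dγ θ * (G (γ θ) * u₀ (γ θ)) with hp1def
    set e1 : ℝ → ℂ := fun θ => γ θ + (ts:ℂ) * c (u₀ (γ θ)) with he1def
    have hp1c : Continuous p1 := hdγcont.mul (hGγ.mul hu₀γ)
    have he1c : Continuous e1 := hγcont.add (continuous_const.mul hcu₀γ)
    have hlow1 : ∀ x ∈ ball xs (m/2), ∀ θ ∈ Set.Icc (0:ℝ) (2*Real.pi),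
        m/2 ≤ ‖e1 θ + x * ((fun _ : ℝ => (-1:ℂ)) θ)‖ := by
      intro x hx θ _
      have h1 : e1 θ + (x:ℂ) * (-1) = D (γ θ) + (((xs:ℝ):ℂ) - ((x:ℝ):ℂ)) := by
        simp only [he1def, hDdef]; ring
      rw [h1]
      have h2 := hmD (γ θ) (hγsphere θ)
      have h3 : ‖((xs:ℝ):ℂ) - ((x:ℝ):ℂ)‖ < m/2 := by
        rw [← Complex.ofReal_sub, Complex.norm_real, Real.norm_eq_abs]
        have := mem_ball.1 hx
        rw [Real.dist_eq] at this
        rw [abs_sub_comm]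
        linarith
      have h4 : ‖D (γ θ)‖ - ‖((xs:ℝ):ℂ) - ((x:ℝ):ℂ)‖ ≤
          ‖D (γ θ) + (((xs:ℝ):ℂ) - ((x:ℝ):ℂ))‖ := by
        have := norm_add_le (D (γ θ) + (((xs:ℝ):ℂ) - ((x:ℝ):ℂ))) (-(((xs:ℝ):ℂ) - ((x:ℝ):ℂ)))
        rw [add_neg_cancel_right, norm_neg] at this
        linarith
      linarith
    have hder := hasDerivAt_param_integral p1 (fun _ => 0) e1 (fun _ => -1) hp1c
      continuous_const he1c continuous_const xs (m/2) (m/2) (by positivity) (by positivity)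
      hlow1
    have hfun : (fun x : ℝ => u x ts) = fun x : ℝ =>
        (1 / (2 * Real.pi * Complex.I)) *
          ∫ θ in (0:ℝ)..(2*Real.pi), (p1 θ + (x:ℂ) * ((fun _ : ℝ => (0:ℂ)) θ)) /
            (e1 θ + (x:ℂ) * ((fun _ : ℝ => (-1:ℂ)) θ)) := by
      funext x
      rw [hu x ts]
      congr 1
      rw [circleIntegral]
      apply intervalIntegral.integral_congr
      intro θ _
      show deriv (circleMap ((x₀:ℝ):ℂ) R) θ •
          ((1 + (ts:ℂ) * deriv c (u₀ (γ θ)) * deriv u₀ (γ θ)) * u₀ (γ θ) /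
            (γ θ - (x:ℂ) + (ts:ℂ) * c (u₀ (γ θ)))) = _
      rw [smul_eq_mul]
      have hden : γ θ - (x:ℂ) + (ts:ℂ) * c (u₀ (γ θ)) = e1 θ + (x:ℂ) * (-1) := by
        simp only [he1def]; ring
      rw [hden, ← mul_div_assoc]
      congr 1
      simp only [hp1def, hGdef, hdγdef]
      ring
    rw [hfun]
    have hval : (∫ θ in (0:ℝ)..(2*Real.pi),
        ((fun _ : ℝ => (0:ℂ)) θ * (e1 θ + (xs:ℂ) * ((fun _ : ℝ => (-1:ℂ)) θ)) -
          (p1 θ + (xs:ℂ) * ((fun _ : ℝ => (0:ℂ)) θ)) * ((fun _ : ℝ => (-1:ℂ)) θ)) /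
          (e1 θ + (xs:ℂ) * ((fun _ : ℝ => (-1:ℂ)) θ))^2) =
        ∮ z in C(((x₀:ℝ):ℂ), R), G z * u₀ z / D z ^ 2 := by
      rw [circleIntegral]
      apply intervalIntegral.integral_congr
      intro θ _
      have hden : e1 θ + (xs:ℂ) * (-1) = D (γ θ) := by
        simp only [he1def, hDdef]; ring
      show (0 * (e1 θ + (xs:ℂ) * (-1)) - (p1 θ + (xs:ℂ) * 0) * (-1)) /
          (e1 θ + (xs:ℂ) * (-1))^2 = deriv (circleMap ((x₀:ℝ):ℂ) R) θ •
            (G (γ θ) * u₀ (γ θ) / D (γ θ) ^ 2)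
      rw [hden, smul_eq_mul, ← mul_div_assoc]
      congr 1
      simp only [hp1def, hdγdef]
      ring
    rw [← hval]
    exact hder.const_mul _
  -- t-derivative
  have hut : HasDerivAt (fun t : ℝ => u xs t)
      ((1 / (2 * Real.pi * Complex.I)) *
        ∮ z in C(((x₀:ℝ):ℂ), R), (qt z * D z - G z * (u₀ z * c (u₀ z))) / D z ^ 2) ts := by
    set p2 : ℝ → ℂ := fun θ => dγ θ * u₀ (γ θ) with hp2def
    set q2 : ℝ → ℂ := fun θ => dγ θ * qt (γ θ) with hq2def
    set e2 : ℝ → ℂ := fun θ => γ θ - ((xs:ℝ):ℂ) with he2def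
    set w2 : ℝ → ℂ := fun θ => c (u₀ (γ θ)) with hw2def
    have hp2c : Continuous p2 := hdγcont.mul hu₀γ
    have hq2c : Continuous q2 := hdγcont.mul hqtγ
    have he2c : Continuous e2 := hγcont.sub continuous_const
    have hw2c : Continuous w2 := hcu₀γ
    obtain ⟨Cw, hCw⟩ := (isCompact_Icc (a := (0:ℝ)) (b := 2*Real.pi)).exists_bound_of_continuousOn
      hcu₀γ.continuousOn
    have hCw0 : 0 ≤ Cw := le_trans (norm_nonneg _) (hCw 0 ⟨le_refl _, by positivity⟩)
    set δ2 : ℝ := m / (2 * (Cw + 1)) with hδ2def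
    have hδ20 : 0 < δ2 := by positivity
    have hlow2 : ∀ t ∈ ball ts δ2, ∀ θ ∈ Set.Icc (0:ℝ) (2*Real.pi),
        m/2 ≤ ‖e2 θ + t * w2 θ‖ := by
      intro t ht θ hθ
      have h1 : e2 θ + (t:ℂ) * w2 θ = D (γ θ) + (((t:ℝ):ℂ) - ((ts:ℝ):ℂ)) * c (u₀ (γ θ)) := by
        simp only [he2def, hw2def, hDdef]; ring
      rw [h1]
      have h2 := hmD (γ θ) (hγsphere θ)
      have h3 : ‖(((t:ℝ):ℂ) - ((ts:ℝ):ℂ)) * c (u₀ (γ θ))‖ ≤ m/2 := by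
        rw [norm_mul, ← Complex.ofReal_sub, Complex.norm_real, Real.norm_eq_abs]
        have ht' : |t - ts| < δ2 := by
          have := mem_ball.1 ht; rwa [Real.dist_eq] at this
        have hc' : ‖c (u₀ (γ θ))‖ ≤ Cw := by
          exact hCw θ hθ
        have habs : ‖c (u₀ (γ θ))‖ ≤ Cw + 1 := by linarith
        have hineq : |t - ts| * ‖c (u₀ (γ θ))‖ ≤ δ2 * (Cw + 1) := by
          apply mul_le_mul ht'.le habs (norm_nonneg _) hδ20.le
        have hδ2eq : δ2 * (Cw + 1) = m / 2 := by
          rw [hδ2def]; field_simp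
        linarith
      have h4 : ‖D (γ θ)‖ -
          ‖(((t:ℝ):ℂ) - ((ts:ℝ):ℂ)) * c (u₀ (γ θ))‖ ≤
          ‖D (γ θ) + (((t:ℝ):ℂ) - ((ts:ℝ):ℂ)) * c (u₀ (γ θ))‖ := by
        have := norm_add_le (D (γ θ) + (((t:ℝ):ℂ) - ((ts:ℝ):ℂ)) * c (u₀ (γ θ)))
          (-((((t:ℝ):ℂ) - ((ts:ℝ):ℂ)) * c (u₀ (γ θ))))
        rw [add_neg_cancel_right, norm_neg] at this
        linarith
      linarith
    have hder := hasDerivAt_param_integral p2 q2 e2 w2 hp2c hq2c he2c hw2c ts δ2 (m/2)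
      hδ20 (by positivity) hlow2
    have hfun : (fun t : ℝ => u xs t) = fun t : ℝ =>
        (1 / (2 * Real.pi * Complex.I)) *
          ∫ θ in (0:ℝ)..(2*Real.pi), (p2 θ + (t:ℂ) * q2 θ) / (e2 θ + (t:ℂ) * w2 θ) := by
      funext t
      rw [hu xs t]
      congr 1
      rw [circleIntegral]
      apply intervalIntegral.integral_congr
      intro θ _
      show deriv (circleMap ((x₀:ℝ):ℂ) R) θ •
          ((1 + (t:ℂ) * deriv c (u₀ (γ θ)) * deriv u₀ (γ θ)) * u₀ (γ θ) /
            (γ θ - (xs:ℂ) + (t:ℂ) * c (u₀ (γ θ)))) = _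
      rw [smul_eq_mul]
      have hden : γ θ - (xs:ℂ) + (t:ℂ) * c (u₀ (γ θ)) = e2 θ + (t:ℂ) * w2 θ := by
        simp only [he2def, hw2def]
      rw [hden, ← mul_div_assoc]
      congr 1
      simp only [hp2def, hq2def, hqtdef, hdγdef]
      ring
    rw [hfun]
    have hval2 : (∫ θ in (0:ℝ)..(2*Real.pi),
        (q2 θ * (e2 θ + (ts:ℂ) * w2 θ) - (p2 θ + (ts:ℂ) * q2 θ) * w2 θ) /
          (e2 θ + (ts:ℂ) * w2 θ)^2) =
        ∮ z in C(((x₀:ℝ):ℂ), R), (qt z * D z - G z * (u₀ z * c (u₀ z))) / D z ^ 2 := by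
      rw [circleIntegral]
      apply intervalIntegral.integral_congr
      intro θ _
      have hden : e2 θ + (ts:ℂ) * w2 θ = D (γ θ) := by
        simp only [he2def, hw2def, hDdef]
      show (q2 θ * (e2 θ + (ts:ℂ) * w2 θ) - (p2 θ + (ts:ℂ) * q2 θ) * w2 θ) /
          (e2 θ + (ts:ℂ) * w2 θ)^2 = deriv (circleMap ((x₀:ℝ):ℂ) R) θ •
            ((qt (γ θ) * D (γ θ) - G (γ θ) * (u₀ (γ θ) * c (u₀ (γ θ)))) / D (γ θ) ^ 2)
      rw [hden, smul_eq_mul, ← mul_div_assoc]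
      congr 1
      simp only [hp2def, hq2def, hw2def, hqtdef, hGdef, hdγdef]
      ring
    rw [← hval2]
    exact hder.const_mul _
  -- value of u at (xs, ts)
  have hval : u xs ts = u₀ zs := by
    have h0 : u xs ts = (1 / (2 * Real.pi * Complex.I)) *
        ∮ z in C(((x₀:ℝ):ℂ), R), G z * u₀ z / D z := by
      rw [hu xs ts]
    rw [h0, I1]
    field_simp
  constructor
  · -- the PDE
    refine ⟨_, _, hux, hut, ?_⟩
    rw [hval]
    have hint3 : CircleIntegrable (fun z => qt z / D z) ((x₀:ℝ):ℂ) R :=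
      ContinuousOn.circleIntegrable hR.le
        ((hqtcont.mono hUs).div (hDdiff.continuousOn.mono hUs) hDsph)
    have hint4 : CircleIntegrable (fun z => G z * (u₀ z * c (u₀ z)) / D z ^ 2) ((x₀:ℝ):ℂ) R := by
      refine ContinuousOn.circleIntegrable hR.le ?_
      apply ContinuousOn.div
      · exact (hGcont.mono hUs).mul ((hu₀.continuousOn.mono hUs).mul
          (hc.continuous.comp_continuousOn (hu₀.continuousOn.mono hUs)))
      · exact (hDdiff.continuousOn.mono hUs).pow 2
      · exact fun z hz => pow_ne_zero 2 (hDsph z hz)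
    have hsplit : (∮ z in C(((x₀:ℝ):ℂ), R), (qt z * D z - G z * (u₀ z * c (u₀ z))) / D z ^ 2) =
        (∮ z in C(((x₀:ℝ):ℂ), R), qt z / D z) -
          ∮ z in C(((x₀:ℝ):ℂ), R), G z * (u₀ z * c (u₀ z)) / D z ^ 2 := by
      rw [← circleIntegral.integral_sub hint3 hint4]
      apply circleIntegral.integral_congr hR.le
      intro z hz
      have hD := hDsph z hz
      show (qt z * D z - G z * (u₀ z * c (u₀ z))) / D z ^ 2 =
        qt z / D z - G z * (u₀ z * c (u₀ z)) / D z ^ 2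
      field_simp
    rw [hsplit, B2, I3, I4, B1, I2]
    simp only [hqtdef]
    field_simp
    ring
  · -- initial condition
    intro x hx
    have hxball : ((x:ℝ):ℂ) ∈ ball ((x₀:ℝ):ℂ) R := by
      rw [mem_ball, Complex.dist_eq, ← Complex.ofReal_sub, Complex.norm_real, Real.norm_eq_abs]
      exact hx
    rw [hu x 0]
    have heq : (∮ z in C(((x₀:ℝ):ℂ), R),
        (1 + ((0:ℝ):ℂ) * deriv c (u₀ z) * deriv u₀ z) * u₀ z /
          (z - ((x:ℝ):ℂ) + ((0:ℝ):ℂ) * c (u₀ z))) =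
        ∮ z in C(((x₀:ℝ):ℂ), R), u₀ z / (z - ((x:ℝ):ℂ)) := by
      apply circleIntegral.integral_congr hR.le
      intro z hz
      simp
    rw [heq, Complex.circleIntegral_div_sub_of_differentiable_on_off_countable countable_empty
      hxball (hu₀.continuousOn.mono hUc)
      (fun z hz => hu₀at z (hUc (ball_subset_closedBall hz.1)))]
    field_simp
end

section
/- Fix x₀ ∈ ℝ and R > 0. Let u₀ : ℂ → ℂ be complex-differentiable on an open neighborhood of the closed disc {z : |z - x₀| ≤ R} and let c : ℂ → ℂ be entire. For real (x, t), define u(x,t) := (1/(2πi)) ∮_{|z-x₀|=R} (1 + t·c'(u₀(z))·u₀'(z)) · u₀(z) / (z - x + t·c(u₀(z))) dz. Let (x*, t*) ∈ ℝ² be such that z - x* + t*·c(u₀(z)) ≠ 0 for all z on the circle |z - x₀| = R. Then the partial derivative of u with respect to x exists at (x*, t*) and equals u_x(x*,t*) = (1/(2πi)) ∮_{|z-x₀|=R} u₀'(z) / (z - x* + t*·c(u₀(z))) dz. -/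
open Complex Metric

private lemma hasDerivAt_circleIntegral_div
    (x₀ : ℂ) (R : ℝ) (hR : 0 < R) (a d : ℂ → ℂ)
    (ha : ContinuousOn a (sphere x₀ R)) (hd : ContinuousOn d (sphere x₀ R))
    (xs : ℝ) (hne : ∀ z ∈ sphere x₀ R, d z - (xs : ℂ) ≠ 0) :
    HasDerivAt (fun x : ℝ => ∮ z in C(x₀, R), a z / (d z - (x : ℂ)))
      (∮ z in C(x₀, R), a z / (d z - (xs : ℂ)) ^ 2) xs := by
  have hγS : ∀ θ : ℝ, circleMap x₀ R θ ∈ sphere x₀ R :=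
    fun θ => circleMap_mem_sphere _ hR.le _
  have hsne : (sphere x₀ R).Nonempty := NormedSpace.sphere_nonempty.mpr hR.le
  obtain ⟨z₀, hz₀S, hz₀min⟩ := (isCompact_sphere x₀ R).exists_isMinOn hsne
    ((hd.sub continuousOn_const).norm)
  set δ : ℝ := ‖d z₀ - (xs : ℂ)‖ with hδdef
  have hδ : 0 < δ := norm_pos_iff.mpr (hne z₀ hz₀S)
  obtain ⟨zM, hzMS, hzMmax⟩ := (isCompact_sphere x₀ R).exists_isMaxOn hsne ha.norm
  set M : ℝ := ‖a zM‖ with hMdef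
  have hlow : ∀ x : ℝ, x ∈ ball xs (δ / 2) → ∀ z ∈ sphere x₀ R,
      δ / 2 ≤ ‖d z - (x : ℂ)‖ := by
    intro x hx z hz
    have h1 : δ ≤ ‖d z - (xs : ℂ)‖ := hz₀min hz
    have h2 : ‖((x : ℂ)) - (xs : ℂ)‖ < δ / 2 := by
      rw [← Complex.ofReal_sub, Complex.norm_real]
      exact mem_ball_iff_norm.mp hx
    have he : d z - (x : ℂ) = (d z - (xs : ℂ)) - ((x : ℂ) - (xs : ℂ)) := by ring
    rw [he]
    have h3 := norm_sub_norm_le (d z - (xs : ℂ)) ((x : ℂ) - (xs : ℂ))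
    linarith
  have hne2 : ∀ x : ℝ, x ∈ ball xs (δ / 2) → ∀ z ∈ sphere x₀ R, d z - (x : ℂ) ≠ 0 := by
    intro x hx z hz h0
    have := hlow x hx z hz
    rw [h0, norm_zero] at this
    linarith
  have hγcont : Continuous (circleMap x₀ R) := continuous_circleMap _ _
  have haγ : Continuous fun θ => a (circleMap x₀ R θ) := ha.comp_continuous hγcont hγS
  have hdγ : Continuous fun θ => d (circleMap x₀ R θ) := hd.comp_continuous hγcont hγS
  have hγ' : Continuous (deriv (circleMap x₀ R)) := by
    have he : deriv (circleMap x₀ R) = fun θ => circleMap 0 R θ * I :=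
      funext fun θ => deriv_circleMap x₀ R θ
    rw [he]
    exact (continuous_circleMap 0 R).mul continuous_const
  have key := intervalIntegral.hasDerivAt_integral_of_dominated_loc_of_deriv_le
    (μ := MeasureTheory.volume) (a := 0) (b := 2 * Real.pi) (x₀ := xs)
    (F := fun (x : ℝ) (θ : ℝ) => deriv (circleMap x₀ R) θ •
      (a (circleMap x₀ R θ) / (d (circleMap x₀ R θ) - (x : ℂ))))
    (F' := fun (x : ℝ) (θ : ℝ) => deriv (circleMap x₀ R) θ •
      (a (circleMap x₀ R θ) / (d (circleMap x₀ R θ) - (x : ℂ)) ^ 2))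
    (bound := fun _ => R * (M / (δ / 2) ^ 2))
    (ball_mem_nhds xs (half_pos hδ)) ?_ ?_ ?_ ?_ ?_ ?_
  · simpa only [circleIntegral] using key.2
  · filter_upwards [ball_mem_nhds xs (half_pos hδ)] with x hx
    exact (hγ'.smul ((haγ.div (hdγ.sub continuous_const))
      (fun θ => hne2 x hx _ (hγS θ)))).aestronglyMeasurable
  · exact ((hγ'.smul ((haγ.div (hdγ.sub continuous_const))
      (fun θ => hne2 xs (mem_ball_self (half_pos hδ)) _ (hγS θ)))).intervalIntegrable 0 (2 * Real.pi))
  · exact (hγ'.smul ((haγ.div ((hdγ.sub continuous_const).pow 2))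
      (fun θ => pow_ne_zero 2 (hne2 xs (mem_ball_self (half_pos hδ)) _ (hγS θ))))).aestronglyMeasurable
  · refine MeasureTheory.ae_of_all _ fun θ _ x hx => ?_
    rw [norm_smul]
    have h1 : ‖deriv (circleMap x₀ R) θ‖ = R := by
      simp [deriv_circleMap, _root_.abs_of_pos hR]
    rw [h1]
    have h2 : ‖a (circleMap x₀ R θ) / (d (circleMap x₀ R θ) - (x : ℂ)) ^ 2‖ ≤ M / (δ / 2) ^ 2 := by
      rw [norm_div, norm_pow]
      refine div_le_div₀ (norm_nonneg _) (hzMmax (hγS θ)) (by positivity) ?_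
      exact pow_le_pow_left₀ (by positivity) (hlow x hx _ (hγS θ)) 2
    exact mul_le_mul_of_nonneg_left h2 hR.le
  · exact intervalIntegrable_const
  · refine MeasureTheory.ae_of_all _ fun θ _ x hx => ?_
    have hD0 : d (circleMap x₀ R θ) - (x : ℂ) ≠ 0 := hne2 x hx _ (hγS θ)
    have h1 : HasDerivAt (fun w : ℂ => d (circleMap x₀ R θ) - w) (-1) (x : ℂ) := by
      simpa using (hasDerivAt_id (x : ℂ)).const_sub (d (circleMap x₀ R θ))
    have h2 := (hasDerivAt_const (x : ℂ) (a (circleMap x₀ R θ))).div h1 hD0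
    have h3 : HasDerivAt (fun w : ℂ => a (circleMap x₀ R θ) / (d (circleMap x₀ R θ) - w))
        (a (circleMap x₀ R θ) / (d (circleMap x₀ R θ) - (x : ℂ)) ^ 2) (x : ℂ) := by
      rw [show a (circleMap x₀ R θ) / (d (circleMap x₀ R θ) - (x : ℂ)) ^ 2 =
          (0 * (d (circleMap x₀ R θ) - (x : ℂ)) - a (circleMap x₀ R θ) * -1) /
            (d (circleMap x₀ R θ) - (x : ℂ)) ^ 2 by ring]
      exact h2
    exact (h3.comp_ofReal).const_smul (deriv (circleMap x₀ R) θ)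
set_option maxHeartbeats 1000000 in
/-- First identity in (13) of the paper: the `x`-partial derivative of the explicit
formula (6) is `u_x(x*,t*) = (1/(2πi)) ∮ u₀'(z)/(z - x* + t*·c(u₀(z))) dz`. -/
theorem explicit_formula_partial_x
    (x₀ : ℝ) (R : ℝ) (hR : 0 < R)
    (u₀ : ℂ → ℂ) (U : Set ℂ) (hU : IsOpen U)
    (hUc : closedBall (x₀ : ℂ) R ⊆ U) (hu₀ : DifferentiableOn ℂ u₀ U)
    (c : ℂ → ℂ) (hc : Differentiable ℂ c)
    (u : ℝ → ℝ → ℂ)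
    (hu : ∀ x t : ℝ, u x t = (1 / (2 * Real.pi * Complex.I)) *
      ∮ z in C((x₀ : ℂ), R),
        (1 + (t : ℂ) * deriv c (u₀ z) * deriv u₀ z) * u₀ z /
          (z - (x : ℂ) + (t : ℂ) * c (u₀ z)))
    (xs ts : ℝ)
    (hne : ∀ z : ℂ, ‖z - (x₀ : ℂ)‖ = R →
      z - (xs : ℂ) + (ts : ℂ) * c (u₀ z) ≠ 0) :
    HasDerivAt (fun x : ℝ => u x ts)
      ((1 / (2 * Real.pi * Complex.I)) *
        ∮ z in C((x₀ : ℂ), R),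
          deriv u₀ z / (z - (xs : ℂ) + (ts : ℂ) * c (u₀ z))) xs := by
  have hsub : sphere (x₀ : ℂ) R ⊆ U := fun z hz => hUc (sphere_subset_closedBall hz)
  have hu₀c : ContinuousOn u₀ U := hu₀.continuousOn
  have hu₀d : ∀ z ∈ sphere (x₀ : ℂ) R, HasDerivAt u₀ (deriv u₀ z) z := fun z hz =>
    (hu₀.differentiableAt (hU.mem_nhds (hsub hz))).hasDerivAt
  have hu₀'c : ContinuousOn (deriv u₀) U :=
    ((hu₀.analyticOnNhd hU).deriv).continuousOn
  have hc'c : Continuous (deriv c) := by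
    rw [← continuousOn_univ]
    exact ((analyticOnNhd_univ_iff_differentiable.mpr hc).deriv).continuousOn
  have hne' : ∀ z ∈ sphere (x₀ : ℂ) R, z - (xs : ℂ) + (ts : ℂ) * c (u₀ z) ≠ 0 :=
    fun z hz => hne z (by exact mem_sphere_iff_norm.mp hz)
  -- continuity of the numerator and of the denominator pieces on the sphere
  have hAc : ContinuousOn (fun z => (1 + (ts : ℂ) * deriv c (u₀ z) * deriv u₀ z) * u₀ z)
      (sphere (x₀ : ℂ) R) := by
    refine ContinuousOn.mono ?_ hsub
    refine ContinuousOn.mul ?_ hu₀c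
    refine ContinuousOn.add continuousOn_const ?_
    refine ContinuousOn.mul ?_ hu₀'c
    exact ContinuousOn.mul continuousOn_const (hc'c.comp_continuousOn hu₀c)
  have hcu : ContinuousOn (fun z => (ts : ℂ) * c (u₀ z)) U :=
    ContinuousOn.mul continuousOn_const (hc.continuous.comp_continuousOn hu₀c)
  have hdc : ContinuousOn (fun z => z + (ts : ℂ) * c (u₀ z)) (sphere (x₀ : ℂ) R) := by
    refine ContinuousOn.mono ?_ hsub
    exact ContinuousOn.add continuousOn_id hcu
  have hDc : ContinuousOn (fun z => z - (xs : ℂ) + (ts : ℂ) * c (u₀ z)) (sphere (x₀ : ℂ) R) := by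
    refine ContinuousOn.mono ?_ hsub
    exact ContinuousOn.add (ContinuousOn.sub continuousOn_id continuousOn_const) hcu
  -- differentiation under the integral sign
  have hmain := hasDerivAt_circleIntegral_div (x₀ : ℂ) R hR
    (fun z => (1 + (ts : ℂ) * deriv c (u₀ z) * deriv u₀ z) * u₀ z)
    (fun z => z + (ts : ℂ) * c (u₀ z)) hAc hdc xs
    (fun z hz => by rw [← sub_add_eq_add_sub]; exact hne' z hz)
  -- the contour identity via integration by parts
  have hkey : (∮ z in C((x₀ : ℂ), R),
        (1 + (ts : ℂ) * deriv c (u₀ z) * deriv u₀ z) * u₀ z /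
          (z + (ts : ℂ) * c (u₀ z) - (xs : ℂ)) ^ 2)
      = ∮ z in C((x₀ : ℂ), R), deriv u₀ z / (z - (xs : ℂ) + (ts : ℂ) * c (u₀ z)) := by
    have e1 : (∮ z in C((x₀ : ℂ), R),
        (1 + (ts : ℂ) * deriv c (u₀ z) * deriv u₀ z) * u₀ z /
          (z + (ts : ℂ) * c (u₀ z) - (xs : ℂ)) ^ 2)
        = ∮ z in C((x₀ : ℂ), R),
            (1 + (ts : ℂ) * deriv c (u₀ z) * deriv u₀ z) * u₀ z /
              (z - (xs : ℂ) + (ts : ℂ) * c (u₀ z)) ^ 2 :=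
      circleIntegral.integral_congr hR.le fun z _ => by
        rw [sub_add_eq_add_sub]
    rw [e1]
    have hg : ∀ z ∈ sphere (x₀ : ℂ) R,
        HasDerivWithinAt (fun w => -(u₀ w / (w - (xs : ℂ) + (ts : ℂ) * c (u₀ w))))
          ((1 + (ts : ℂ) * deriv c (u₀ z) * deriv u₀ z) * u₀ z /
              (z - (xs : ℂ) + (ts : ℂ) * c (u₀ z)) ^ 2
            - deriv u₀ z / (z - (xs : ℂ) + (ts : ℂ) * c (u₀ z)))
          (sphere (x₀ : ℂ) R) z := by
      intro z hz
      have hu0 := hu₀d z hz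
      have hcz : HasDerivAt (fun w => c (u₀ w)) (deriv c (u₀ z) * deriv u₀ z) z :=
        (hc (u₀ z)).hasDerivAt.comp z hu0
      have hDz : HasDerivAt (fun w => w - (xs : ℂ) + (ts : ℂ) * c (u₀ w))
          (1 + (ts : ℂ) * (deriv c (u₀ z) * deriv u₀ z)) z := by
        exact ((hasDerivAt_id' z).sub_const ((xs : ℂ))).add (hcz.const_mul ((ts : ℂ)))
      have hdiv := (hu0.div hDz (hne' z hz)).neg
      have hval : (1 + (ts : ℂ) * deriv c (u₀ z) * deriv u₀ z) * u₀ z /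
              (z - (xs : ℂ) + (ts : ℂ) * c (u₀ z)) ^ 2
            - deriv u₀ z / (z - (xs : ℂ) + (ts : ℂ) * c (u₀ z))
          = -((deriv u₀ z * (z - (xs : ℂ) + (ts : ℂ) * c (u₀ z))
              - u₀ z * (1 + (ts : ℂ) * (deriv c (u₀ z) * deriv u₀ z))) /
                (z - (xs : ℂ) + (ts : ℂ) * c (u₀ z)) ^ 2) := by
        have hD := hne' z hz
        field_simp
        ring
      exact (hval ▸ hdiv).hasDerivWithinAt
    have hzero : (∮ z in C((x₀ : ℂ), R),
        ((1 + (ts : ℂ) * deriv c (u₀ z) * deriv u₀ z) * u₀ z /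
            (z - (xs : ℂ) + (ts : ℂ) * c (u₀ z)) ^ 2
          - deriv u₀ z / (z - (xs : ℂ) + (ts : ℂ) * c (u₀ z)))) = 0 :=
      circleIntegral.integral_eq_zero_of_hasDerivWithinAt hR.le hg
    have hint1 : CircleIntegrable (fun z => (1 + (ts : ℂ) * deriv c (u₀ z) * deriv u₀ z) * u₀ z /
        (z - (xs : ℂ) + (ts : ℂ) * c (u₀ z)) ^ 2) (x₀ : ℂ) R :=
      ContinuousOn.circleIntegrable hR.le
        (hAc.div (hDc.pow 2) fun z hz => pow_ne_zero 2 (hne' z hz))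
    have hint2 : CircleIntegrable (fun z => deriv u₀ z /
        (z - (xs : ℂ) + (ts : ℂ) * c (u₀ z))) (x₀ : ℂ) R :=
      ContinuousOn.circleIntegrable hR.le
        ((hu₀'c.mono hsub).div hDc fun z hz => hne' z hz)
    rw [circleIntegral.integral_sub hint1 hint2] at hzero
    exact sub_eq_zero.mp hzero
  have hmain' : HasDerivAt (fun x : ℝ => ∮ z in C((x₀ : ℂ), R),
        (1 + (ts : ℂ) * deriv c (u₀ z) * deriv u₀ z) * u₀ z /
          (z + (ts : ℂ) * c (u₀ z) - (x : ℂ)))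
      (∮ z in C((x₀ : ℂ), R), deriv u₀ z / (z - (xs : ℂ) + (ts : ℂ) * c (u₀ z))) xs := by
    rw [← hkey]; exact hmain
  have hfun : (fun x : ℝ => u x ts) = fun x : ℝ => (1 / (2 * Real.pi * Complex.I)) *
      ∮ z in C((x₀ : ℂ), R),
        (1 + (ts : ℂ) * deriv c (u₀ z) * deriv u₀ z) * u₀ z /
          (z + (ts : ℂ) * c (u₀ z) - (x : ℂ)) := by
    funext x
    rw [hu x ts]
    congr 1
    exact circleIntegral.integral_congr hR.le fun z _ => by rw [sub_add_eq_add_sub]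
  rw [hfun]
  exact hmain'.const_mul _
end

section
/- Fix x₀ ∈ ℝ and R > 0. Let u₀ : ℂ → ℂ be complex-differentiable on an open neighborhood of the closed disc {z : |z - x₀| ≤ R} and let c : ℂ → ℂ be entire. For real (x, t), define u(x,t) := (1/(2πi)) ∮_{|z-x₀|=R} (1 + t·c'(u₀(z))·u₀'(z)) · u₀(z) / (z - x + t·c(u₀(z))) dz. Let (x*, t*) ∈ ℝ² be such that z - x* + t*·c(u₀(z)) ≠ 0 for all z on the circle |z - x₀| = R. Then the partial derivative of u with respect to t exists at (x*, t*) and equals u_t(x*,t*) = -(1/(2πi)) ∮_{|z-x₀|=R} c(u₀(z))·u₀'(z) / (z - x* + t*·c(u₀(z))) dz. -/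
open Complex Metric

lemma my_circleIntegral_deriv_eq_zero {x₀ : ℂ} {R : ℝ} (hR : 0 ≤ R) {V : Set ℂ}
    (hsub : sphere x₀ R ⊆ V) {h h' : ℂ → ℂ}
    (hd : ∀ z ∈ V, HasDerivAt h (h' z) z) (hcont : ContinuousOn h' V) :
    (∮ z in C(x₀, R), h' z) = 0 := by
  have hmem : ∀ θ : ℝ, circleMap x₀ R θ ∈ V := fun θ => hsub (circleMap_mem_sphere x₀ hR θ)
  have hkey : ∀ θ ∈ Set.uIcc (0:ℝ) (2*Real.pi),
      HasDerivAt (fun θ => h (circleMap x₀ R θ))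
        (deriv (circleMap x₀ R) θ • h' (circleMap x₀ R θ)) θ := by
    intro θ _
    have h1 : HasDerivAt (circleMap x₀ R) (circleMap 0 R θ * I) θ := hasDerivAt_circleMap x₀ R θ
    have h2 : HasDerivAt h (h' (circleMap x₀ R θ)) (circleMap x₀ R θ) := hd _ (hmem θ)
    have := h2.scomp θ h1
    rw [deriv_circleMap]
    exact this
  have hint : IntervalIntegrable
      (fun θ => deriv (circleMap x₀ R) θ • h' (circleMap x₀ R θ)) MeasureTheory.volume 0 (2*Real.pi) := by
    apply Continuous.intervalIntegrable
    have : Continuous fun θ : ℝ => h' (circleMap x₀ R θ) :=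
      hcont.comp_continuous (continuous_circleMap _ _) (fun θ => hmem θ)
    simp only [deriv_circleMap]
    exact ((continuous_circleMap 0 R).mul continuous_const).smul this
  have := intervalIntegral.integral_eq_sub_of_hasDerivAt hkey hint
  rw [circleIntegral, this]
  simp [circleMap, Complex.ext_iff]

/-- Second identity in (13) of the paper. -/
theorem explicit_formula_partial_t
    (x₀ : ℝ) (R : ℝ) (hR : 0 < R)
    (u₀ : ℂ → ℂ) (U : Set ℂ) (hU : IsOpen U)
    (hUc : closedBall (x₀ : ℂ) R ⊆ U) (hu₀ : DifferentiableOn ℂ u₀ U)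
    (c : ℂ → ℂ) (hc : Differentiable ℂ c)
    (u : ℝ → ℝ → ℂ)
    (hu : ∀ x t : ℝ, u x t = (1 / (2 * Real.pi * Complex.I)) *
      ∮ z in C((x₀ : ℂ), R),
        (1 + (t : ℂ) * deriv c (u₀ z) * deriv u₀ z) * u₀ z /
          (z - (x : ℂ) + (t : ℂ) * c (u₀ z)))
    (xs ts : ℝ)
    (hne : ∀ z : ℂ, ‖z - (x₀ : ℂ)‖ = R →
      z - (xs : ℂ) + (ts : ℂ) * c (u₀ z) ≠ 0) :
    HasDerivAt (fun t : ℝ => u xs t)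
      (-((1 / (2 * Real.pi * Complex.I)) *
        ∮ z in C((x₀ : ℂ), R),
          c (u₀ z) * deriv u₀ z / (z - (xs : ℂ) + (ts : ℂ) * c (u₀ z)))) ts := by
  -- basic continuity facts
  have hsph : sphere (x₀:ℂ) R ⊆ U := sphere_subset_closedBall.trans hUc
  have hu₀c : ContinuousOn u₀ U := hu₀.continuousOn
  have hduc : ContinuousOn (deriv u₀) U := ((hu₀.analyticOnNhd hU).deriv).continuousOn
  have hcc : Continuous c := hc.continuous
  have hdcc : Continuous (deriv c) := by
    rw [← continuousOn_univ]
    exact ((hc.differentiableOn.analyticOnNhd isOpen_univ).deriv).continuousOn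
  have hne' : ∀ z ∈ sphere (x₀:ℂ) R, z - (xs:ℂ) + (ts:ℂ) * c (u₀ z) ≠ 0 := by
    intro z hz
    exact hne z (by rw [← Complex.dist_eq]; exact hz)
  -- the denominator as a function, and its continuity on U
  have hDc : ContinuousOn (fun z : ℂ => z - (xs:ℂ) + (ts:ℂ) * c (u₀ z)) U :=
    ((continuousOn_id.sub continuousOn_const).add
      (continuousOn_const.mul (hcc.comp_continuousOn hu₀c)))
  -- the open set V where everything is nice
  set V : Set ℂ := U ∩ (fun z : ℂ => z - (xs:ℂ) + (ts:ℂ) * c (u₀ z)) ⁻¹' {(0:ℂ)}ᶜ with hVdef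
  have hVopen : IsOpen V := hDc.isOpen_inter_preimage hU isOpen_compl_singleton
  have hsphV : sphere (x₀:ℂ) R ⊆ V := fun z hz => ⟨hsph hz, hne' z hz⟩
  have hVU : V ⊆ U := Set.inter_subset_left
  have hVne : ∀ z ∈ V, z - (xs:ℂ) + (ts:ℂ) * c (u₀ z) ≠ 0 := fun z hz => hz.2
  -- compactness bounds on the sphere
  have hcomp : IsCompact (sphere (x₀:ℂ) R) := isCompact_sphere _ _
  have hsne : (sphere (x₀:ℂ) R).Nonempty := NormedSpace.sphere_nonempty.mpr hR.le
  obtain ⟨z₀, hz₀s, hz₀min⟩ := hcomp.exists_isMinOn hsne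
    ((continuous_norm.comp_continuousOn (hDc.mono hsph)))
  set m : ℝ := ‖z₀ - (xs:ℂ) + (ts:ℂ) * c (u₀ z₀)‖ with hmdef
  have hm : 0 < m := norm_pos_iff.mpr (hne' z₀ hz₀s)
  obtain ⟨M, hM⟩ := hcomp.exists_bound_of_continuousOn ((hcc.comp_continuousOn hu₀c).mono hsph)
  have hM0 : 0 ≤ M := le_trans (norm_nonneg _) (hM z₀ hz₀s)
  set δ : ℝ := m / (2 * (M + 1)) with hδdef
  have hδ : 0 < δ := by positivity
  -- lower bound for the shifted denominators
  have hDlow : ∀ t : ℝ, |t - ts| ≤ δ → ∀ z ∈ sphere (x₀:ℂ) R,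
      m / 2 ≤ ‖z - (xs:ℂ) + (t:ℂ) * c (u₀ z)‖ := by
    intro t ht z hz
    have ha : m ≤ ‖z - (xs:ℂ) + (ts:ℂ) * c (u₀ z)‖ := hz₀min hz
    have hb : ‖((t:ℂ) - (ts:ℂ)) * c (u₀ z)‖ ≤ δ * M := by
      rw [norm_mul]
      have h1 : ‖((t:ℂ) - (ts:ℂ))‖ = |t - ts| := by
        rw [← Complex.ofReal_sub, Complex.norm_real, Real.norm_eq_abs]
      rw [h1]
      exact mul_le_mul ht (hM z hz) (norm_nonneg _) hδ.le
    have h2 : ‖z - (xs:ℂ) + (ts:ℂ) * c (u₀ z)‖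
        ≤ ‖z - (xs:ℂ) + (t:ℂ) * c (u₀ z)‖ + ‖((t:ℂ) - (ts:ℂ)) * c (u₀ z)‖ := by
      have h3 := norm_add_le (z - (xs:ℂ) + (t:ℂ) * c (u₀ z)) (-(((t:ℂ) - (ts:ℂ)) * c (u₀ z)))
      have he2 : (z - (xs:ℂ) + (t:ℂ) * c (u₀ z)) + (-(((t:ℂ) - (ts:ℂ)) * c (u₀ z)))
          = z - (xs:ℂ) + (ts:ℂ) * c (u₀ z) := by ring
      rw [he2, norm_neg] at h3
      exact h3
    have hδM : δ * M ≤ m / 2 := by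
      rw [hδdef]
      rw [div_mul_eq_mul_div, div_le_div_iff₀ (by positivity) (by norm_num)]
      nlinarith
    linarith
  have hDne : ∀ t : ℝ, |t - ts| ≤ δ → ∀ z ∈ sphere (x₀:ℂ) R,
      z - (xs:ℂ) + (t:ℂ) * c (u₀ z) ≠ 0 := by
    intro t ht z hz h0
    have h4 := hDlow t ht z hz
    rw [h0] at h4
    simp only [norm_zero] at h4
    linarith
  -- pointwise facts along the circle
  have hcirc : ∀ θ : ℝ, circleMap (x₀:ℂ) R θ ∈ sphere (x₀:ℂ) R :=
    circleMap_mem_sphere _ hR.le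
  have hcf : ∀ {f : ℂ → ℂ}, ContinuousOn f U →
      Continuous (fun θ : ℝ => f (circleMap (x₀:ℂ) R θ)) :=
    fun hf => hf.comp_continuous (continuous_circleMap _ _) (fun θ => hsph (hcirc θ))
  have c1 : Continuous (fun θ : ℝ => u₀ (circleMap (x₀:ℂ) R θ)) := hcf hu₀c
  have c2 : Continuous (fun θ : ℝ => deriv u₀ (circleMap (x₀:ℂ) R θ)) := hcf hduc
  have c3 : Continuous (fun θ : ℝ => c (u₀ (circleMap (x₀:ℂ) R θ))) :=
    hcf (hcc.comp_continuousOn hu₀c)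
  have c4 : Continuous (fun θ : ℝ => deriv c (u₀ (circleMap (x₀:ℂ) R θ))) :=
    hcf (hdcc.comp_continuousOn hu₀c)
  have c0 : Continuous (fun θ : ℝ => circleMap (x₀:ℂ) R θ) := continuous_circleMap _ _
  -- the parametrized integrand and its t-derivative
  set Fn : ℝ → ℝ → ℂ := fun t θ =>
    (circleMap 0 R θ * I) •
      ((1 + (t:ℂ) * deriv c (u₀ (circleMap (x₀:ℂ) R θ)) * deriv u₀ (circleMap (x₀:ℂ) R θ)) *
        u₀ (circleMap (x₀:ℂ) R θ) /
        (circleMap (x₀:ℂ) R θ - (xs:ℂ) + (t:ℂ) * c (u₀ (circleMap (x₀:ℂ) R θ)))) with hFn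
  set Fn' : ℝ → ℝ → ℂ := fun t θ =>
    (circleMap 0 R θ * I) •
      ((deriv c (u₀ (circleMap (x₀:ℂ) R θ)) * deriv u₀ (circleMap (x₀:ℂ) R θ) *
          u₀ (circleMap (x₀:ℂ) R θ) *
          (circleMap (x₀:ℂ) R θ - (xs:ℂ) + (t:ℂ) * c (u₀ (circleMap (x₀:ℂ) R θ)))
        - (1 + (t:ℂ) * deriv c (u₀ (circleMap (x₀:ℂ) R θ)) * deriv u₀ (circleMap (x₀:ℂ) R θ)) *
          u₀ (circleMap (x₀:ℂ) R θ) * c (u₀ (circleMap (x₀:ℂ) R θ)))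
        / (circleMap (x₀:ℂ) R θ - (xs:ℂ) + (t:ℂ) * c (u₀ (circleMap (x₀:ℂ) R θ)))^2) with hFn'
  -- continuity of Fn t and Fn' t for t close to ts
  have hFcont : ∀ t : ℝ, |t - ts| ≤ δ → Continuous (Fn t) := by
    intro t ht
    apply ((continuous_circleMap 0 R).mul continuous_const).smul
    apply Continuous.div
    · exact (continuous_const.add ((continuous_const.mul c4).mul c2)).mul c1
    · exact (c0.sub continuous_const).add (continuous_const.mul c3)
    · exact fun θ => hDne t ht _ (hcirc θ)
  have hF'cont : ∀ t : ℝ, |t - ts| ≤ δ → Continuous (Fn' t) := by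
    intro t ht
    apply ((continuous_circleMap 0 R).mul continuous_const).smul
    apply Continuous.div
    · exact (((c4.mul c2).mul c1).mul
        ((c0.sub continuous_const).add (continuous_const.mul c3))).sub
        (((continuous_const.add ((continuous_const.mul c4).mul c2)).mul c1).mul c3)
    · exact ((c0.sub continuous_const).add (continuous_const.mul c3)).pow 2
    · exact fun θ => pow_ne_zero 2 (hDne t ht _ (hcirc θ))
  -- measurability data
  have hmeas : ∀ᶠ t in nhds ts, MeasureTheory.AEStronglyMeasurable (Fn t)
      (MeasureTheory.volume.restrict (Set.uIoc (0:ℝ) (2*Real.pi))) := by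
    filter_upwards [Metric.ball_mem_nhds ts hδ] with t ht
    exact (hFcont t (by rw [mem_ball, Real.dist_eq] at ht; exact ht.le)).aestronglyMeasurable
  have hF_int : IntervalIntegrable (Fn ts) MeasureTheory.volume 0 (2*Real.pi) :=
    (hFcont ts (by simp [hδ.le])).intervalIntegrable _ _
  have hF'_meas : MeasureTheory.AEStronglyMeasurable (Fn' ts)
      (MeasureTheory.volume.restrict (Set.uIoc (0:ℝ) (2*Real.pi))) :=
    (hF'cont ts (by simp [hδ.le])).aestronglyMeasurable
  -- uniform bound via joint continuity on a compact set
  set K : Set (ℝ × ℝ) := Set.Icc (ts - δ) (ts + δ) ×ˢ Set.Icc (0:ℝ) (2*Real.pi) with hKdef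
  have hKc : IsCompact K := isCompact_Icc.prod isCompact_Icc
  have hΦ : ContinuousOn (fun p : ℝ × ℝ => Fn' p.1 p.2) K := by
    have cz : Continuous (fun p : ℝ × ℝ => circleMap (x₀:ℂ) R p.2) :=
      (continuous_circleMap _ _).comp continuous_snd
    have hmapsU : ∀ p : ℝ × ℝ, circleMap (x₀:ℂ) R p.2 ∈ U := fun p => hsph (hcirc p.2)
    have d1 : Continuous (fun p : ℝ × ℝ => u₀ (circleMap (x₀:ℂ) R p.2)) :=
      hu₀c.comp_continuous cz hmapsU
    have d2 : Continuous (fun p : ℝ × ℝ => deriv u₀ (circleMap (x₀:ℂ) R p.2)) :=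
      hduc.comp_continuous cz hmapsU
    have d3 : Continuous (fun p : ℝ × ℝ => c (u₀ (circleMap (x₀:ℂ) R p.2))) :=
      (hcc.comp_continuousOn hu₀c).comp_continuous cz hmapsU
    have d4 : Continuous (fun p : ℝ × ℝ => deriv c (u₀ (circleMap (x₀:ℂ) R p.2))) :=
      (hdcc.comp_continuousOn hu₀c).comp_continuous cz hmapsU
    have pt : Continuous (fun p : ℝ × ℝ => ((p.1 : ℂ))) :=
      Complex.continuous_ofReal.comp continuous_fst
    have hden : Continuous (fun p : ℝ × ℝ =>
        circleMap (x₀:ℂ) R p.2 - (xs:ℂ) + (p.1:ℂ) * c (u₀ (circleMap (x₀:ℂ) R p.2))) :=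
      (cz.sub continuous_const).add (pt.mul d3)
    have hdenne : ∀ p ∈ K, (circleMap (x₀:ℂ) R p.2 - (xs:ℂ) +
        (p.1:ℂ) * c (u₀ (circleMap (x₀:ℂ) R p.2)))^2 ≠ 0 := by
      intro p hp
      have h5 : |p.1 - ts| ≤ δ := by
        rw [abs_sub_le_iff]
        constructor <;> [linarith [hp.1.2]; linarith [hp.1.1]]
      exact pow_ne_zero 2 (hDne p.1 h5 _ (hcirc p.2))
    apply Continuous.continuousOn ((continuous_circleMap 0 R).comp continuous_snd |>.mul
      continuous_const) |>.smul
    exact ContinuousOn.div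
      (((((d4.mul d2).mul d1).mul hden).sub
        (((continuous_const.add ((pt.mul d4).mul d2)).mul d1).mul d3)).continuousOn)
      ((hden.pow 2).continuousOn) hdenne
  obtain ⟨C, hC⟩ := hKc.exists_bound_of_continuousOn hΦ
  have h_bound : ∀ᵐ θ ∂MeasureTheory.volume, θ ∈ Set.uIoc (0:ℝ) (2*Real.pi) →
      ∀ t ∈ ball ts δ, ‖Fn' t θ‖ ≤ C := by
    apply MeasureTheory.ae_of_all
    intro θ hθ t ht
    have hθ' : θ ∈ Set.Icc (0:ℝ) (2*Real.pi) := by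
      rw [Set.uIoc_of_le (by positivity)] at hθ
      exact Set.Ioc_subset_Icc_self hθ
    have ht' : t ∈ Set.Icc (ts - δ) (ts + δ) := by
      rw [mem_ball, Real.dist_eq] at ht
      rw [Set.mem_Icc]
      rw [abs_sub_lt_iff] at ht
      constructor <;> linarith [ht.1, ht.2]
    exact hC (t, θ) ⟨ht', hθ'⟩
  have h_diff : ∀ᵐ θ ∂MeasureTheory.volume, θ ∈ Set.uIoc (0:ℝ) (2*Real.pi) →
      ∀ t ∈ ball ts δ, HasDerivAt (fun t => Fn t θ) (Fn' t θ) t := by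
    apply MeasureTheory.ae_of_all
    intro θ _ t ht
    have htδ : |t - ts| ≤ δ := by rw [mem_ball, Real.dist_eq] at ht; exact ht.le
    have hz := hcirc θ
    set z : ℂ := circleMap (x₀:ℂ) R θ with hzdef
    have hden0 : z - (xs:ℂ) + ((t:ℝ):ℂ) * c (u₀ z) ≠ 0 := hDne t htδ z hz
    have hnum : HasDerivAt (fun w : ℂ =>
        (1 + w * deriv c (u₀ z) * deriv u₀ z) * u₀ z)
        (1 * deriv c (u₀ z) * deriv u₀ z * u₀ z) ((t:ℝ):ℂ) :=
      ((((hasDerivAt_id _).mul_const _).mul_const _).const_add 1).mul_const _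
    have hdenD : HasDerivAt (fun w : ℂ => z - (xs:ℂ) + w * c (u₀ z))
        (1 * c (u₀ z)) ((t:ℝ):ℂ) :=
      ((hasDerivAt_id _).mul_const _).const_add _
    have hG := (hnum.div hdenD hden0).comp_ofReal
    have := hG.const_smul (circleMap 0 R θ * I)
    simp only [hFn, hFn']
    refine HasDerivAt.congr_deriv this ?_
    rw [smul_eq_mul, smul_eq_mul]
    ring
  have HH := intervalIntegral.hasDerivAt_integral_of_dominated_loc_of_deriv_le (Metric.ball_mem_nhds ts hδ)
    hmeas hF_int hF'_meas h_bound (intervalIntegrable_const) h_diff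
  -- identify the parametrized integral with the circle integral in the formula
  have hIeq : ∀ t : ℝ, (∮ z in C((x₀:ℂ), R),
      (1 + (t:ℂ) * deriv c (u₀ z) * deriv u₀ z) * u₀ z / (z - (xs:ℂ) + (t:ℂ) * c (u₀ z)))
      = ∫ θ in (0:ℝ)..(2*Real.pi), Fn t θ := by
    intro t
    rw [circleIntegral]
    simp only [hFn, deriv_circleMap]
  have hfun : (fun t : ℝ => u xs t)
      = fun t => (1 / (2 * (Real.pi:ℂ) * Complex.I)) * ∫ θ in (0:ℝ)..(2*Real.pi), Fn t θ := by
    funext t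
    rw [hu xs t, hIeq t]
  -- identify the derivative integral with a circle integral
  have hPP : (∫ θ in (0:ℝ)..(2*Real.pi), Fn' ts θ)
      = ∮ z in C((x₀:ℂ), R),
        (deriv c (u₀ z) * deriv u₀ z * u₀ z * (z - (xs:ℂ) + (ts:ℂ) * c (u₀ z))
          - (1 + (ts:ℂ) * deriv c (u₀ z) * deriv u₀ z) * u₀ z * c (u₀ z))
          / (z - (xs:ℂ) + (ts:ℂ) * c (u₀ z))^2 := by
    rw [circleIntegral]
    simp only [hFn', deriv_circleMap]
  -- continuity pieces on V
  have e0 : ContinuousOn (fun z : ℂ => u₀ z) V := hu₀c.mono hVU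
  have e1 : ContinuousOn (deriv u₀) V := hduc.mono hVU
  have e2 : ContinuousOn (fun z : ℂ => c (u₀ z)) V := (hcc.comp_continuousOn hu₀c).mono hVU
  have e3 : ContinuousOn (fun z : ℂ => deriv c (u₀ z)) V :=
    (hdcc.comp_continuousOn hu₀c).mono hVU
  have e4 : ContinuousOn (fun z : ℂ => z - (xs:ℂ) + (ts:ℂ) * c (u₀ z)) V := hDc.mono hVU
  have hh'cont : ContinuousOn (fun z : ℂ =>
      ((deriv u₀ z * c (u₀ z) + u₀ z * (deriv c (u₀ z) * deriv u₀ z)) *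
        (z - (xs:ℂ) + (ts:ℂ) * c (u₀ z))
        - u₀ z * c (u₀ z) * (1 + (ts:ℂ) * (deriv c (u₀ z) * deriv u₀ z)))
        / (z - (xs:ℂ) + (ts:ℂ) * c (u₀ z))^2) V := by
    apply ContinuousOn.div
    · exact (((e1.mul e2).add (e0.mul (e3.mul e1))).mul e4).sub
        ((e0.mul e2).mul (continuousOn_const.add (continuousOn_const.mul (e3.mul e1))))
    · exact e4.pow 2
    · exact fun z hz => pow_ne_zero 2 (hVne z hz)
  have qqcont : ContinuousOn (fun z : ℂ =>
      c (u₀ z) * deriv u₀ z / (z - (xs:ℂ) + (ts:ℂ) * c (u₀ z))) V :=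
    ContinuousOn.div (e2.mul e1) e4 (fun z hz => hVne z hz)
  have ihh' : CircleIntegrable (fun z : ℂ =>
      ((deriv u₀ z * c (u₀ z) + u₀ z * (deriv c (u₀ z) * deriv u₀ z)) *
        (z - (xs:ℂ) + (ts:ℂ) * c (u₀ z))
        - u₀ z * c (u₀ z) * (1 + (ts:ℂ) * (deriv c (u₀ z) * deriv u₀ z)))
        / (z - (xs:ℂ) + (ts:ℂ) * c (u₀ z))^2) (x₀:ℂ) R :=
    (hh'cont.mono hsphV).circleIntegrable hR.le
  have iqq : CircleIntegrable (fun z : ℂ =>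
      c (u₀ z) * deriv u₀ z / (z - (xs:ℂ) + (ts:ℂ) * c (u₀ z))) (x₀:ℂ) R :=
    (qqcont.mono hsphV).circleIntegrable hR.le
  -- pointwise algebraic identity on the sphere
  have hEqOn : Set.EqOn
      (fun z : ℂ =>
        (deriv c (u₀ z) * deriv u₀ z * u₀ z * (z - (xs:ℂ) + (ts:ℂ) * c (u₀ z))
          - (1 + (ts:ℂ) * deriv c (u₀ z) * deriv u₀ z) * u₀ z * c (u₀ z))
          / (z - (xs:ℂ) + (ts:ℂ) * c (u₀ z))^2)
      (fun z : ℂ =>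
        ((deriv u₀ z * c (u₀ z) + u₀ z * (deriv c (u₀ z) * deriv u₀ z)) *
          (z - (xs:ℂ) + (ts:ℂ) * c (u₀ z))
          - u₀ z * c (u₀ z) * (1 + (ts:ℂ) * (deriv c (u₀ z) * deriv u₀ z)))
          / (z - (xs:ℂ) + (ts:ℂ) * c (u₀ z))^2
        - c (u₀ z) * deriv u₀ z / (z - (xs:ℂ) + (ts:ℂ) * c (u₀ z)))
      (sphere (x₀:ℂ) R) := by
    intro z hz
    have h0 := hne' z hz
    field_simp
    ring
  -- the circle integral of the exact derivative vanishes
  have hzero : (∮ z in C((x₀:ℂ), R),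
      ((deriv u₀ z * c (u₀ z) + u₀ z * (deriv c (u₀ z) * deriv u₀ z)) *
        (z - (xs:ℂ) + (ts:ℂ) * c (u₀ z))
        - u₀ z * c (u₀ z) * (1 + (ts:ℂ) * (deriv c (u₀ z) * deriv u₀ z)))
        / (z - (xs:ℂ) + (ts:ℂ) * c (u₀ z))^2) = 0 := by
    apply my_circleIntegral_deriv_eq_zero hR.le hsphV
      (h := fun w : ℂ => u₀ w * c (u₀ w) / (w - (xs:ℂ) + (ts:ℂ) * c (u₀ w)))
    · intro z hz
      have hu₀z : HasDerivAt u₀ (deriv u₀ z) z :=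
        (hu₀.differentiableAt (hU.mem_nhds (hVU hz))).hasDerivAt
      have hcz : HasDerivAt (fun w => c (u₀ w)) (deriv c (u₀ z) * deriv u₀ z) z := by
        simpa [Function.comp_def] using (hc (u₀ z)).hasDerivAt.comp z hu₀z
      have hN := hu₀z.mul hcz
      have hDz := ((hasDerivAt_id z).sub_const (xs:ℂ)).add (hcz.const_mul (ts:ℂ))
      exact hN.div hDz (hVne z hz)
    · exact hh'cont
  -- put everything together
  have hval : (∫ θ in (0:ℝ)..(2*Real.pi), Fn' ts θ)
      = -∮ z in C((x₀:ℂ), R),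
          c (u₀ z) * deriv u₀ z / (z - (xs:ℂ) + (ts:ℂ) * c (u₀ z)) := by
    rw [hPP, circleIntegral.integral_congr hR.le hEqOn,
      circleIntegral.integral_sub ihh' iqq, hzero, zero_sub]
  rw [hfun]
  have H2 := HH.2.const_mul (1 / (2 * (Real.pi:ℂ) * Complex.I))
  rw [hval] at H2
  simpa [mul_neg] using H2
end
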